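/- arXiv:2008.05092 — 8 statements merged into one kernel-verified Lean document; each statement's English description precedes it below -/
import Mathlib

section
/- Let E_L ∈ ℂ^{n₁×r} be a matrix (e.g. a Vandermonde matrix) and H ∈ ℂ^{s×r} a matrix all of whose columns h_k have unit ℓ₂-norm. Then the smallest singular value of the Khatri–Rao product E_L ⊙ H satisfies σ_min((E_L ⊙ H)* (E_L ⊙ H)) ≥ σ_min(E_L* E_L). In particular, if σ_min(E_L* E_L) ≥ n₁/μ₁ then σ_min((E_L ⊙ H)* (E_L ⊙ H)) ≥ n₁/μ₁. -/
open Matrix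

/-- The column-wise Khatri–Rao product. -/
noncomputable def khatriRao {n₁ s r : ℕ} (A : Matrix (Fin n₁) (Fin r) ℂ)
    (H : Matrix (Fin s) (Fin r) ℂ) : Matrix (Fin n₁ × Fin s) (Fin r) ℂ :=
  Matrix.of fun p k => A p.1 k * H p.2 k

/-- Smallest "singular value" of a Hermitian PSD matrix, as the infimum of its
quadratic form over unit vectors. -/
noncomputable def sMinQuad {r : ℕ} (M : Matrix (Fin r) (Fin r) ℂ) : ℝ :=
  ⨅ x : {x : Fin r → ℂ // ∑ k, Complex.normSq (x k) = 1},
    (dotProduct (star (x : Fin r → ℂ)) (M.mulVec (x : Fin r → ℂ))).re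

lemma quad_re {m : Type*} [Fintype m] {r : ℕ} (M : Matrix m (Fin r) ℂ) (x : Fin r → ℂ) :
    (dotProduct (star x) ((Mᴴ * M).mulVec x)).re
      = ∑ p, Complex.normSq (M.mulVec x p) := by
  rw [← Matrix.mulVec_mulVec, dotProduct_mulVec, ← Matrix.star_mulVec]
  simp [dotProduct, Complex.normSq_eq_conj_mul_self, Complex.re_sum, Complex.normSq_apply]

lemma bdd {m : Type*} [Fintype m] {r : ℕ} (M : Matrix m (Fin r) ℂ) :
    BddBelow (Set.range fun x : {x : Fin r → ℂ // ∑ k, Complex.normSq (x k) = 1} =>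
      (dotProduct (star (x : Fin r → ℂ)) ((Mᴴ * M).mulVec (x : Fin r → ℂ))).re) := by
  refine ⟨0, fun y hy => ?_⟩
  obtain ⟨x, rfl⟩ := hy
  show (0:ℝ) ≤ (dotProduct (star (x : Fin r → ℂ)) ((Mᴴ * M).mulVec (x : Fin r → ℂ))).re
  rw [quad_re]
  exact Finset.sum_nonneg fun p _ => Complex.normSq_nonneg _

lemma key {m : Type*} [Fintype m] {r : ℕ} (M : Matrix m (Fin r) ℂ) (z : Fin r → ℂ) :
    sMinQuad (Mᴴ * M) * (∑ k, Complex.normSq (z k)) ≤ ∑ p, Complex.normSq (M.mulVec z p) := by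
  set c : ℝ := ∑ k, Complex.normSq (z k) with hc
  rcases eq_or_lt_of_le (show (0:ℝ) ≤ c from Finset.sum_nonneg fun k _ => Complex.normSq_nonneg _)
    with h0 | hpos
  · have hz : z = 0 := by
      funext k
      have := (Finset.sum_eq_zero_iff_of_nonneg (fun k _ => Complex.normSq_nonneg (z k))).mp
        h0.symm k (Finset.mem_univ k)
      exact Complex.normSq_eq_zero.mp this
    simp [hz, ← h0]
  · set u : Fin r → ℂ := fun k => (Real.sqrt c : ℂ)⁻¹ * z k with hu
    have hsqrt : (0:ℝ) < Real.sqrt c := Real.sqrt_pos.mpr hpos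
    have hnsq : Complex.normSq ((Real.sqrt c : ℂ)⁻¹) = c⁻¹ := by
      rw [Complex.normSq_inv, Complex.normSq_ofReal, Real.mul_self_sqrt hpos.le]
    have hunit : ∑ k, Complex.normSq (u k) = 1 := by
      simp only [hu, Complex.normSq_mul, hnsq, ← Finset.mul_sum, ← hc]
      field_simp
    have hquad : sMinQuad (Mᴴ * M) ≤ ∑ p, Complex.normSq (M.mulVec u p) := by
      rw [← quad_re]
      exact ciInf_le (bdd M) ⟨u, hunit⟩
    have hmv : ∀ p, Complex.normSq (M.mulVec z p) = c * Complex.normSq (M.mulVec u p) := by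
      intro p
      have : M.mulVec u p = (Real.sqrt c : ℂ)⁻¹ * M.mulVec z p := by
        simp [hu, Matrix.mulVec, dotProduct, Finset.mul_sum]
        exact Finset.sum_congr rfl fun k _ => by ring
      rw [this, Complex.normSq_mul, hnsq]
      field_simp
    calc sMinQuad (Mᴴ * M) * c ≤ (∑ p, Complex.normSq (M.mulVec u p)) * c := by
          exact mul_le_mul_of_nonneg_right hquad hpos.le
      _ = ∑ p, Complex.normSq (M.mulVec z p) := by
          rw [Finset.sum_congr rfl fun p _ => hmv p, ← Finset.mul_sum]; ring

/-- If every column of `H` has unit ℓ₂-norm, then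
`σ_min((E_L ⊙ H)* (E_L ⊙ H)) ≥ σ_min(E_L* E_L)`. -/
theorem khatriRao_sMin_ge {n₁ s r : ℕ}
    (EL : Matrix (Fin n₁) (Fin r) ℂ) (H : Matrix (Fin s) (Fin r) ℂ)
    (hH : ∀ k, ∑ i, Complex.normSq (H i k) = 1) :
    sMinQuad (ELᴴ * EL) ≤ sMinQuad ((khatriRao EL H)ᴴ * khatriRao EL H) := by
  rcases isEmpty_or_nonempty {x : Fin r → ℂ // ∑ k, Complex.normSq (x k) = 1} with he | hne
  · simp [sMinQuad, Real.iInf_of_isEmpty]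
  · apply le_ciInf
    rintro ⟨x, hx⟩
    show sMinQuad (ELᴴ * EL) ≤
      (dotProduct (star x) (((khatriRao EL H)ᴴ * khatriRao EL H).mulVec x)).re
    rw [quad_re]
    have hKmv : ∀ i j, (khatriRao EL H).mulVec x (i, j)
        = EL.mulVec (fun k => H j k * x k) i := by
      intro i j
      simp only [khatriRao, Matrix.mulVec, dotProduct, Matrix.of_apply]
      exact Finset.sum_congr rfl fun k _ => by ring
    have hsum : ∑ p : Fin n₁ × Fin s, Complex.normSq ((khatriRao EL H).mulVec x p)
        = ∑ j : Fin s, ∑ i : Fin n₁, Complex.normSq (EL.mulVec (fun k => H j k * x k) i) := by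
      rw [Fintype.sum_prod_type]
      rw [Finset.sum_comm]
      exact Finset.sum_congr rfl fun j _ => Finset.sum_congr rfl fun i _ => by rw [hKmv]
    rw [hsum]
    have hstep : ∀ j : Fin s,
        sMinQuad (ELᴴ * EL) * (∑ k, Complex.normSq (H j k * x k))
          ≤ ∑ i : Fin n₁, Complex.normSq (EL.mulVec (fun k => H j k * x k) i) :=
      fun j => key EL _
    calc sMinQuad (ELᴴ * EL)
        = sMinQuad (ELᴴ * EL) * ∑ j : Fin s, ∑ k, Complex.normSq (H j k * x k) := by
          have : ∑ j : Fin s, ∑ k, Complex.normSq (H j k * x k) = 1 := by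
            rw [Finset.sum_comm]
            calc ∑ k : Fin r, ∑ j : Fin s, Complex.normSq (H j k * x k)
                = ∑ k : Fin r, (∑ j : Fin s, Complex.normSq (H j k)) * Complex.normSq (x k) := by
                  refine Finset.sum_congr rfl fun k _ => ?_
                  rw [Finset.sum_mul]
                  exact Finset.sum_congr rfl fun j _ => by rw [Complex.normSq_mul]
              _ = ∑ k : Fin r, Complex.normSq (x k) := by
                  refine Finset.sum_congr rfl fun k _ => by rw [hH k, one_mul]
              _ = 1 := hx
          rw [this, mul_one]
      _ = ∑ j : Fin s, sMinQuad (ELᴴ * EL) * ∑ k, Complex.normSq (H j k * x k) := by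
          rw [Finset.mul_sum]
      _ ≤ ∑ j : Fin s, ∑ i : Fin n₁, Complex.normSq (EL.mulVec (fun k => H j k * x k) i) :=
          Finset.sum_le_sum fun j _ => hstep j
end

section
/- Let H(X♮) = E_{h,L} diag(d₁,…,d_r) E_Rᵀ with E_{h,L} ∈ ℂ^{sn₁×r} of full column rank, and let U ∈ ℂ^{sn₁×r} be a matrix with orthonormal columns spanning the column space of H(X♮). Write U in blocks U₀,…,U_{n₁-1} ∈ ℂ^{s×r}, where U_ℓ consists of rows ℓs through (ℓ+1)s−1 of U. If σ_min(E_{h,L}* E_{h,L}) ≥ n₁/μ₁ and each row-block of E_{h,L} satisfies ‖e_jᵀ E_{h,L}‖₂² summed over the j in block i equals r (which holds when E_{h,L} = E_L ⊙ H with unit-norm columns h_k and unimodular Vandermonde entries), then max_{0 ≤ i ≤ n₁-1} ‖U_i‖_F² ≤ μ₁ r / n₁. -/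
open Matrix

private lemma euclid_norm_sq {r : ℕ} (x : Fin r → ℂ) :
    ‖((WithLp.equiv 2 (Fin r → ℂ)).symm x)‖ ^ 2 = ∑ k, Complex.normSq (x k) := by
  rw [EuclideanSpace.norm_eq, Real.sq_sqrt (by positivity)]
  simp [Complex.sq_norm]

open scoped Matrix.Norms.L2Operator in
private lemma conjTranspose_mulVec_normSq_le {r : ℕ} (A : Matrix (Fin r) (Fin r) ℂ)
    {c : ℝ} (hc : 0 ≤ c)
    (h : ∀ x : Fin r → ℂ, ∑ k, Complex.normSq (A.mulVec x k) ≤ c * ∑ k, Complex.normSq (x k)) :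
    ∀ x : Fin r → ℂ, ∑ k, Complex.normSq (Aᴴ.mulVec x k) ≤ c * ∑ k, Complex.normSq (x k) := by
  have hA : ‖A‖ ≤ Real.sqrt c := by
    rw [Matrix.l2_opNorm_def]
    apply ContinuousLinearMap.opNorm_le_bound _ (Real.sqrt_nonneg c)
    intro x
    have h1 : ‖((Matrix.toEuclideanLin.trans LinearMap.toContinuousLinearMap) A) x‖ ^ 2
        ≤ (Real.sqrt c * ‖x‖) ^ 2 := by
      have hx : x = (WithLp.equiv 2 (Fin r → ℂ)).symm (WithLp.equiv 2 (Fin r → ℂ) x) := rfl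
      have happ : (((Matrix.toEuclideanLin.trans LinearMap.toContinuousLinearMap) A) x
            : EuclideanSpace ℂ (Fin r))
          = (WithLp.equiv 2 (Fin r → ℂ)).symm (A.mulVec (WithLp.equiv 2 (Fin r → ℂ) x)) := rfl
      rw [happ, euclid_norm_sq, mul_pow, Real.sq_sqrt hc]
      calc ∑ k, Complex.normSq (A.mulVec (WithLp.equiv 2 (Fin r → ℂ) x) k)
          ≤ c * ∑ k, Complex.normSq ((WithLp.equiv 2 (Fin r → ℂ) x) k) := h _
        _ = c * ‖x‖ ^ 2 := by rw [← euclid_norm_sq]; rfl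
    have h2 := Real.sqrt_le_sqrt h1
    rwa [Real.sqrt_sq (norm_nonneg _), Real.sqrt_sq (by positivity)] at h2
  have hAH : ‖Aᴴ‖ ≤ Real.sqrt c := by rw [Matrix.l2_opNorm_conjTranspose]; exact hA
  intro x
  have hb := Matrix.l2_opNorm_mulVec Aᴴ ((WithLp.equiv 2 (Fin r → ℂ)).symm x)
  have hb2 : ‖(EuclideanSpace.equiv (Fin r) ℂ).symm (Aᴴ *ᵥ ((WithLp.equiv 2 (Fin r → ℂ)).symm x))‖
      ≤ Real.sqrt c * ‖((WithLp.equiv 2 (Fin r → ℂ)).symm x)‖ :=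
    hb.trans (by
      apply mul_le_mul_of_nonneg_right hAH (norm_nonneg _))
  have hsq := mul_self_le_mul_self (norm_nonneg _) hb2
  have e1 : ‖(EuclideanSpace.equiv (Fin r) ℂ).symm (Aᴴ *ᵥ ((WithLp.equiv 2 (Fin r → ℂ)).symm x))‖
      * ‖(EuclideanSpace.equiv (Fin r) ℂ).symm (Aᴴ *ᵥ ((WithLp.equiv 2 (Fin r → ℂ)).symm x))‖
      = ∑ k, Complex.normSq (Aᴴ.mulVec x k) := by
    rw [← sq]
    exact euclid_norm_sq (Aᴴ.mulVec x)
  have e2 : (Real.sqrt c * ‖((WithLp.equiv 2 (Fin r → ℂ)).symm x)‖)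
      * (Real.sqrt c * ‖((WithLp.equiv 2 (Fin r → ℂ)).symm x)‖)
      = c * ∑ k, Complex.normSq (x k) := by
    rw [← euclid_norm_sq x]; ring_nf; rw [Real.sq_sqrt hc]; ring
  rw [e1, e2] at hsq
  exact hsq

/-- Block incoherence of an orthonormal basis `U` of the column space of
`E = E_{h,L}`: if `σ_min(E* E) ≥ n₁/μ₁` and every block row of `E` has squared
Frobenius norm `r`, then every `s × r` row-block `U_i` of `U` satisfies
`‖U_i‖_F² ≤ μ₁ r / n₁`. -/
theorem block_incoherence_of_U {s n₁ r : ℕ} (μ₁ : ℝ) (hμ₁ : 0 < μ₁)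
    (E U : Matrix (Fin n₁ × Fin s) (Fin r) ℂ)
    (hsmin : ∀ x : Fin r → ℂ,
      ((n₁ : ℝ) / μ₁) * ∑ k, Complex.normSq (x k) ≤
        ∑ p, Complex.normSq (E.mulVec x p))
    (hrow : ∀ i : Fin n₁,
      ∑ j : Fin s, ∑ k : Fin r, Complex.normSq (E (i, j) k) = (r : ℝ))
    (hUorth : Uᴴ * U = 1)
    (hUE : ∃ M : Matrix (Fin r) (Fin r) ℂ, U = E * M) :
    ∀ i : Fin n₁,
      ∑ j : Fin s, ∑ k : Fin r, Complex.normSq (U (i, j) k) ≤ μ₁ * r / n₁ := by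
  obtain ⟨M, rfl⟩ := hUE
  intro i
  have hn : (0 : ℝ) < n₁ := by exact_mod_cast i.pos
  set c : ℝ := μ₁ / n₁ with hcdef
  have hc0 : 0 ≤ c := by positivity
  -- forward bound: ‖M x‖² ≤ c ‖x‖²
  have hM : ∀ x : Fin r → ℂ,
      ∑ k, Complex.normSq (M.mulVec x k) ≤ c * ∑ k, Complex.normSq (x k) := by
    intro x
    have h1 := hsmin (M.mulVec x)
    have hmm : E.mulVec (M.mulVec x) = (E * M).mulVec x := by rw [Matrix.mulVec_mulVec]
    rw [hmm] at h1
    -- ∑ normSq ((E*M) *ᵥ x) = ∑ normSq x, using orthonormality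
    have horth : ∑ p, Complex.normSq ((E * M).mulVec x p) = ∑ k, Complex.normSq (x k) := by
      set w := (E * M).mulVec x with hw
      have hdp : star w ⬝ᵥ w = star x ⬝ᵥ x := by
        calc star w ⬝ᵥ w = (star x ᵥ* (E * M)ᴴ) ⬝ᵥ w := by rw [hw, star_mulVec]
          _ = star x ⬝ᵥ ((E * M)ᴴ *ᵥ w) := (Matrix.dotProduct_mulVec _ _ _).symm
          _ = star x ⬝ᵥ (((E * M)ᴴ * (E * M)) *ᵥ x) := by rw [hw, Matrix.mulVec_mulVec]
          _ = star x ⬝ᵥ x := by rw [hUorth, Matrix.one_mulVec]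
      have hcast : ((∑ p, Complex.normSq (w p) : ℝ) : ℂ)
          = ((∑ k, Complex.normSq (x k) : ℝ) : ℂ) := by
        push_cast
        calc (∑ p, (Complex.normSq (w p) : ℂ))
            = star w ⬝ᵥ w := by
              simp [dotProduct, Complex.normSq_eq_conj_mul_self, Pi.star_apply]
          _ = star x ⬝ᵥ x := hdp
          _ = ∑ k, (Complex.normSq (x k) : ℂ) := by
              simp [dotProduct, Complex.normSq_eq_conj_mul_self, Pi.star_apply]
      exact_mod_cast hcast
    rw [horth] at h1
    have hpos : (0 : ℝ) < (n₁ : ℝ) / μ₁ := by positivity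
    calc ∑ k, Complex.normSq (M.mulVec x k)
        = c * (((n₁ : ℝ) / μ₁) * ∑ k, Complex.normSq (M.mulVec x k)) := by
          rw [hcdef]; field_simp
      _ ≤ c * ∑ k, Complex.normSq (x k) := mul_le_mul_of_nonneg_left h1 hc0
  have hMH := conjTranspose_mulVec_normSq_le M hc0 hM
  -- per-row bound
  have hblock : ∀ j : Fin s,
      ∑ k, Complex.normSq ((E * M) (i, j) k) ≤ c * ∑ m, Complex.normSq (E (i, j) m) := by
    intro j
    have hrowrep : ∀ k, Mᴴ.mulVec (fun m => star (E (i, j) m)) k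
        = star ((E * M) (i, j) k) := by
      intro k
      simp only [Matrix.mulVec, Matrix.mul_apply, dotProduct,
        Matrix.conjTranspose_apply, Matrix.star_apply]
      rw [star_sum]
      exact Finset.sum_congr rfl fun m _ => by rw [star_mul']; exact mul_comm _ _
    have := hMH (fun m => star (E (i, j) m))
    calc ∑ k, Complex.normSq ((E * M) (i, j) k)
        = ∑ k, Complex.normSq (Mᴴ.mulVec (fun m => star (E (i, j) m)) k) := by
          refine Finset.sum_congr rfl fun k _ => ?_
          rw [hrowrep k]; simp [Complex.star_def, Complex.normSq_conj]
      _ ≤ c * ∑ m, Complex.normSq (star (E (i, j) m)) := this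
      _ = c * ∑ m, Complex.normSq (E (i, j) m) := by simp [Complex.star_def, Complex.normSq_conj]
  calc ∑ j, ∑ k, Complex.normSq ((E * M) (i, j) k)
      ≤ ∑ j, c * ∑ m, Complex.normSq (E (i, j) m) :=
        Finset.sum_le_sum fun j _ => hblock j
    _ = c * ∑ j, ∑ m, Complex.normSq (E (i, j) m) := by rw [Finset.mul_sum]
    _ = c * r := by rw [hrow i]
    _ = μ₁ * r / n₁ := by rw [hcdef]; ring
end

section
/- Fix x ∈ ℂ^s and i ∈ {0,…,n-1}. Let U ∈ ℂ^{sn₁×r} with orthonormal columns satisfy max_j ‖U_j‖_F² ≤ μ₁r/n for all s×r row-blocks U_j. Then ‖U* G(x e_iᵀ)‖_F² ≤ ‖x‖₂² · μ₁r/n, where G(x e_iᵀ) = G_i ⊗ x with G_i the normalized Hankel basis matrix. -/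
open Matrix

lemma cs_aux {s : ℕ} (f g : Fin s → ℂ) :
    Complex.normSq (∑ a, f a * g a) ≤
      (∑ a, Complex.normSq (f a)) * (∑ a, Complex.normSq (g a)) := by
  have h1 : ‖∑ a, f a * g a‖ ≤
      ∑ a, ‖f a‖ * ‖g a‖ := by
    calc ‖∑ a, f a * g a‖ ≤ ∑ a, ‖f a * g a‖ := by
          simpa using norm_sum_le Finset.univ (fun a => f a * g a)
      _ = ∑ a, ‖f a‖ * ‖g a‖ := by simp [norm_mul]
  have h2 := Finset.sum_mul_sq_le_sq_mul_sq Finset.univ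
    (fun a => ‖f a‖) (fun a => ‖g a‖)
  have h3 : ‖∑ a, f a * g a‖ ^ 2 ≤
      (∑ a, ‖f a‖ * ‖g a‖) ^ 2 := by
    apply pow_le_pow_left₀ (by positivity) h1
  calc Complex.normSq (∑ a, f a * g a)
      = ‖∑ a, f a * g a‖ ^ 2 := (Complex.sq_norm _).symm
    _ ≤ (∑ a, ‖f a‖ * ‖g a‖) ^ 2 := h3
    _ ≤ (∑ a, ‖f a‖ ^ 2) * (∑ a, ‖g a‖ ^ 2) := h2
    _ = (∑ a, Complex.normSq (f a)) * (∑ a, Complex.normSq (g a)) := by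
        simp [Complex.sq_norm]

/-- For `M = G(x e_iᵀ) = G_i ⊗ x` and an incoherent orthonormal `U`,
`‖U* G(x e_iᵀ)‖_F² ≤ ‖x‖₂² μ₁ r / n`. -/
theorem Ustar_hankel_atom_bound {s n n₁ n₂ r : ℕ} (hn : n₁ + n₂ = n + 1)
    (μ₁ : ℝ)
    (w : Fin n → ℕ)
    (hw : ∀ i, w i = (Finset.univ.filter
      (fun p : Fin n₁ × Fin n₂ => (p.1 : ℕ) + (p.2 : ℕ) = (i : ℕ))).card)
    (i : Fin n) (x : Fin s → ℂ)
    (U : Matrix (Fin n₁ × Fin s) (Fin r) ℂ) (hUorth : Uᴴ * U = 1)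
    (hU : ∀ j : Fin n₁,
      ∑ a : Fin s, ∑ c : Fin r, Complex.normSq (U (j, a) c) ≤ μ₁ * r / n)
    (M : Matrix (Fin n₁ × Fin s) (Fin n₂) ℂ)
    (hM : M = Matrix.of fun (p : Fin n₁ × Fin s) (k : Fin n₂) =>
      (if (p.1 : ℕ) + (k : ℕ) = (i : ℕ)
        then (Complex.ofReal (Real.sqrt (w i)))⁻¹ else 0) * x p.2) :
    ∑ c : Fin r, ∑ k : Fin n₂, Complex.normSq ((Uᴴ * M) c k) ≤
      (∑ a, Complex.normSq (x a)) * (μ₁ * r / n) := by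
  have hx : (0:ℝ) ≤ ∑ a, Complex.normSq (x a) :=
    Finset.sum_nonneg fun _ _ => Complex.normSq_nonneg _
  -- trivial case r = 0
  rcases Nat.eq_zero_or_pos r with hr | hr
  · subst hr; simp
  -- trivial case s = 0
  rcases Nat.eq_zero_or_pos s with hs | hs
  · subst hs
    simp [Matrix.mul_apply]
  -- n₁ = 0 contradicts orthonormality (r > 0)
  rcases Nat.eq_zero_or_pos n₁ with hn₁ | hn₁
  · exfalso
    subst hn₁
    have := congrFun (congrFun hUorth ⟨0, hr⟩) ⟨0, hr⟩
    simp [Matrix.mul_apply, Matrix.one_apply] at this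
  have hB : (0:ℝ) ≤ μ₁ * r / n := by
    refine le_trans ?_ (hU ⟨0, hn₁⟩)
    exact Finset.sum_nonneg fun _ _ => Finset.sum_nonneg fun _ _ => Complex.normSq_nonneg _
  -- trivial case n₂ = 0
  rcases Nat.eq_zero_or_pos n₂ with hn₂ | hn₂
  · subst hn₂
    simpa using mul_nonneg hx hB
  -- main case
  have hi : (i : ℕ) < n := i.is_lt
  have hwpos : 0 < w i := by
    rw [hw]
    apply Finset.card_pos.mpr
    refine ⟨(⟨min (i:ℕ) (n₁-1), by omega⟩, ⟨(i:ℕ) - min (i:ℕ) (n₁-1), by omega⟩), ?_⟩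
    simp only [Finset.mem_filter, Finset.mem_univ, true_and]
    omega
  have hWpos : (0:ℝ) < (w i : ℝ) := by exact_mod_cast hwpos
  have hentry : ∀ (c : Fin r) (k : Fin n₂), (Uᴴ * M) c k =
      ∑ j : Fin n₁, (if (j:ℕ)+(k:ℕ)=(i:ℕ)
        then ((Real.sqrt (w i) : ℂ))⁻¹ else 0) *
          ∑ a, (starRingEnd ℂ) (U (j,a) c) * x a := by
    intro c k
    rw [hM, Matrix.mul_apply, Fintype.sum_prod_type]
    refine Finset.sum_congr rfl fun j _ => ?_
    rw [Finset.mul_sum]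
    refine Finset.sum_congr rfl fun a _ => ?_
    simp only [Matrix.conjTranspose_apply, Matrix.of_apply, Complex.star_def]
    ring
  have hinv : Complex.normSq ((↑(Real.sqrt (w i)) : ℂ)⁻¹) = ((w i : ℝ))⁻¹ := by
    rw [← Complex.ofReal_inv, Complex.normSq_ofReal, ← mul_inv,
      Real.mul_self_sqrt (by positivity)]
  have key : ∀ k : Fin n₂, ∑ c, Complex.normSq ((Uᴴ * M) c k) ≤
      if ∃ j : Fin n₁, (j:ℕ)+(k:ℕ)=(i:ℕ)
        then ((w i : ℝ))⁻¹ * ((∑ a, Complex.normSq (x a)) * (μ₁ * r / n)) else 0 := by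
    intro k
    by_cases hpos : ∃ j : Fin n₁, (j:ℕ)+(k:ℕ)=(i:ℕ)
    · obtain ⟨j, hj⟩ := hpos
      have hfor : ∀ c, (Uᴴ * M) c k =
          (↑(Real.sqrt (w i)) : ℂ)⁻¹ * ∑ a, (starRingEnd ℂ) (U (j,a) c) * x a := by
        intro c
        rw [hentry]
        rw [Finset.sum_eq_single j]
        · rw [if_pos hj]
        · intro j' _ hne
          have hne' : ¬((j':ℕ)+(k:ℕ)=(i:ℕ)) := fun h => hne (Fin.ext (by omega))
          rw [if_neg hne', zero_mul]
        · intro h; exact absurd (Finset.mem_univ j) h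
      rw [if_pos ⟨j, hj⟩]
      have hS : ∑ c, Complex.normSq (∑ a, (starRingEnd ℂ) (U (j,a) c) * x a) ≤
          (∑ a, Complex.normSq (x a)) * (μ₁ * r / n) := by
        calc ∑ c, Complex.normSq (∑ a, (starRingEnd ℂ) (U (j,a) c) * x a)
            ≤ ∑ c, ((∑ a, Complex.normSq ((starRingEnd ℂ) (U (j,a) c))) *
                (∑ a, Complex.normSq (x a))) :=
              Finset.sum_le_sum fun c _ => cs_aux _ _
          _ = (∑ a, ∑ c, Complex.normSq (U (j,a) c)) * (∑ a, Complex.normSq (x a)) := by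
              rw [← Finset.sum_mul, Finset.sum_comm]
              simp [Complex.normSq_conj]
          _ ≤ (μ₁ * r / n) * (∑ a, Complex.normSq (x a)) :=
              mul_le_mul_of_nonneg_right (hU j) hx
          _ = (∑ a, Complex.normSq (x a)) * (μ₁ * r / n) := mul_comm _ _
      calc ∑ c, Complex.normSq ((Uᴴ * M) c k)
          = ∑ c, ((w i : ℝ))⁻¹ *
              Complex.normSq (∑ a, (starRingEnd ℂ) (U (j,a) c) * x a) := by
            refine Finset.sum_congr rfl fun c _ => ?_
            rw [hfor c, Complex.normSq_mul, hinv]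
        _ = ((w i : ℝ))⁻¹ * ∑ c, Complex.normSq (∑ a, (starRingEnd ℂ) (U (j,a) c) * x a) :=
            (Finset.mul_sum _ _ _).symm
        _ ≤ ((w i : ℝ))⁻¹ * ((∑ a, Complex.normSq (x a)) * (μ₁ * r / n)) :=
            mul_le_mul_of_nonneg_left hS (by positivity)
    · rw [if_neg hpos]
      have hzero : ∀ c, (Uᴴ * M) c k = 0 := by
        intro c
        rw [hentry]
        refine Finset.sum_eq_zero fun j _ => ?_
        rw [if_neg (fun h => hpos ⟨j, h⟩), zero_mul]
      simp [hzero]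
  have hcard : (Finset.univ.filter
      (fun k : Fin n₂ => ∃ j : Fin n₁, (j:ℕ)+(k:ℕ)=(i:ℕ))).card = w i := by
    rw [hw]
    symm
    apply Finset.card_bij (fun p _ => p.2)
    · intro p hp
      simp only [Finset.mem_filter, Finset.mem_univ, true_and] at hp ⊢
      exact ⟨p.1, hp⟩
    · intro p hp q hq hpq
      simp only [Finset.mem_filter, Finset.mem_univ, true_and] at hp hq
      have h2 : (p.2 : ℕ) = (q.2 : ℕ) := congrArg Fin.val hpq
      exact Prod.ext (Fin.ext (by omega)) hpq
    · intro k hk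
      simp only [Finset.mem_filter, Finset.mem_univ, true_and] at hk
      obtain ⟨j, hj⟩ := hk
      exact ⟨(j, k), by simp [Finset.mem_filter, hj], rfl⟩
  rw [Finset.sum_comm]
  calc ∑ k : Fin n₂, ∑ c, Complex.normSq ((Uᴴ * M) c k)
      ≤ ∑ k : Fin n₂, (if ∃ j : Fin n₁, (j:ℕ)+(k:ℕ)=(i:ℕ)
          then ((w i : ℝ))⁻¹ * ((∑ a, Complex.normSq (x a)) * (μ₁ * r / n)) else 0) :=
        Finset.sum_le_sum fun k _ => key k
    _ = (Finset.univ.filter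
          (fun k : Fin n₂ => ∃ j : Fin n₁, (j:ℕ)+(k:ℕ)=(i:ℕ))).card •
          (((w i : ℝ))⁻¹ * ((∑ a, Complex.normSq (x a)) * (μ₁ * r / n))) := by
        rw [Finset.sum_ite, Finset.sum_const, Finset.sum_const_zero, add_zero]
    _ = (w i : ℝ) * (((w i : ℝ))⁻¹ * ((∑ a, Complex.normSq (x a)) * (μ₁ * r / n))) := by
        rw [hcard, nsmul_eq_mul]
    _ = (∑ a, Complex.normSq (x a)) * (μ₁ * r / n) := by
        rw [← mul_assoc, mul_inv_cancel₀ (ne_of_gt hWpos), one_mul]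
end

section
/- Fix x ∈ ℂ^s and i ∈ {0,…,n-1}. Let V ∈ ℂ^{n₂×r} with orthonormal columns satisfy max_k ‖e_kᵀ V‖₂² ≤ μ₁r/n. Then ‖G(x e_iᵀ) V‖_F² = ‖x‖₂² · (1/w_i) Σ_{j+k=i} ‖V* e_k‖₂² ≤ ‖x‖₂² · μ₁r/n. -/
open Matrix

lemma normSq_sum_ite {m : ℕ} (P : Fin m → Prop) [DecidablePred P]
    (hP : ∀ k l, P k → P l → k = l) (f : Fin m → ℂ) :
    Complex.normSq (∑ k, if P k then f k else 0) =
      ∑ k, if P k then Complex.normSq (f k) else 0 := by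
  by_cases h : ∃ k, P k
  · obtain ⟨k₀, hk₀⟩ := h
    have h1 : ∀ b ∈ Finset.univ, b ≠ k₀ → (if P b then f b else 0) = 0 := by
      intro b _ hb
      simp only [ite_eq_right_iff]
      intro hpb; exact absurd (hP b k₀ hpb hk₀) hb
    have h2 : ∀ b ∈ Finset.univ, b ≠ k₀ →
        (if P b then Complex.normSq (f b) else 0) = 0 := by
      intro b _ hb
      simp only [ite_eq_right_iff]
      intro hpb; exact absurd (hP b k₀ hpb hk₀) hb
    rw [Finset.sum_eq_single k₀ h1 (by simp), Finset.sum_eq_single k₀ h2 (by simp)]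
    simp [hk₀]
  · push_neg at h
    simp [h]

/-- For `M = G(x e_iᵀ) = G_i ⊗ x` and a row-incoherent `V`,
`‖G(x e_iᵀ) V‖_F² = ‖x‖₂² (1/w_i) Σ_{j+k=i} ‖V* e_k‖₂² ≤ ‖x‖₂² μ₁ r / n`. -/
theorem hankel_atom_V_bound {s n n₁ n₂ r : ℕ} (hn : n₁ + n₂ = n + 1)
    (μ₁ : ℝ)
    (w : Fin n → ℕ)
    (hw : ∀ i, w i = (Finset.univ.filter
      (fun p : Fin n₁ × Fin n₂ => (p.1 : ℕ) + (p.2 : ℕ) = (i : ℕ))).card)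
    (i : Fin n) (x : Fin s → ℂ)
    (V : Matrix (Fin n₂) (Fin r) ℂ) (hVorth : Vᴴ * V = 1)
    (hV : ∀ k : Fin n₂, ∑ c : Fin r, Complex.normSq (V k c) ≤ μ₁ * r / n)
    (M : Matrix (Fin n₁ × Fin s) (Fin n₂) ℂ)
    (hM : M = Matrix.of fun (p : Fin n₁ × Fin s) (k : Fin n₂) =>
      (if (p.1 : ℕ) + (k : ℕ) = (i : ℕ)
        then (Complex.ofReal (Real.sqrt (w i)))⁻¹ else 0) * x p.2) :
    (∑ p, ∑ c : Fin r, Complex.normSq ((M * V) p c) =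
      (∑ a, Complex.normSq (x a)) * ((w i : ℝ))⁻¹ *
        ∑ j : Fin n₁, ∑ k : Fin n₂,
          if (j : ℕ) + (k : ℕ) = (i : ℕ)
            then ∑ c : Fin r, Complex.normSq (V k c) else 0) ∧
    ∑ p, ∑ c : Fin r, Complex.normSq ((M * V) p c) ≤
      (∑ a, Complex.normSq (x a)) * (μ₁ * r / n) := by
  set q : ℂ := (Complex.ofReal (Real.sqrt (w i)))⁻¹ with hq
  -- entry formula
  have hentry : ∀ (j : Fin n₁) (a : Fin s) (c : Fin r),
      (M * V) (j, a) c = q * (x a * ∑ k : Fin n₂, if (j : ℕ) + (k : ℕ) = (i : ℕ) then V k c else 0) := by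
    intro j a c
    rw [Matrix.mul_apply]
    simp only [hM, Matrix.of_apply, Finset.mul_sum, mul_ite, mul_zero, ite_mul, zero_mul]
    refine Finset.sum_congr rfl fun k _ => ?_
    split <;> ring
  have hnq : Complex.normSq q = ((w i : ℝ))⁻¹ := by
    rw [hq, map_inv₀, Complex.normSq_ofReal,
      Real.mul_self_sqrt (by positivity)]
  have huniq : ∀ (j : Fin n₁) (k l : Fin n₂),
      (j : ℕ) + (k : ℕ) = (i : ℕ) → (j : ℕ) + (l : ℕ) = (i : ℕ) → k = l := by
    intro j k l hk hl
    exact Fin.ext (Nat.add_left_cancel (hk.trans hl.symm))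
  have hEq : ∑ p, ∑ c : Fin r, Complex.normSq ((M * V) p c) =
      (∑ a, Complex.normSq (x a)) * ((w i : ℝ))⁻¹ *
        ∑ j : Fin n₁, ∑ k : Fin n₂,
          if (j : ℕ) + (k : ℕ) = (i : ℕ)
            then ∑ c : Fin r, Complex.normSq (V k c) else 0 := by
    rw [Fintype.sum_prod_type]
    calc ∑ j : Fin n₁, ∑ a : Fin s, ∑ c : Fin r, Complex.normSq ((M * V) (j, a) c)
        = ∑ j : Fin n₁, ∑ a : Fin s, ∑ c : Fin r,
            ((w i : ℝ))⁻¹ * Complex.normSq (x a) *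
            (∑ k : Fin n₂, if (j : ℕ) + (k : ℕ) = (i : ℕ) then Complex.normSq (V k c) else 0) := by
          refine Finset.sum_congr rfl fun j _ => Finset.sum_congr rfl fun a _ =>
            Finset.sum_congr rfl fun c _ => ?_
          rw [hentry j a c, Complex.normSq_mul, Complex.normSq_mul, hnq,
            normSq_sum_ite _ (huniq j) _]
          ring
      _ = (∑ a, Complex.normSq (x a)) * ((w i : ℝ))⁻¹ *
            ∑ j : Fin n₁, ∑ k : Fin n₂,
              if (j : ℕ) + (k : ℕ) = (i : ℕ)
                then ∑ c : Fin r, Complex.normSq (V k c) else 0 := by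
          have hstep : ∀ (j : Fin n₁) (a : Fin s),
              (∑ c : Fin r, (((w i : ℝ))⁻¹ * Complex.normSq (x a) *
                ∑ k : Fin n₂, if (j : ℕ) + (k : ℕ) = (i : ℕ)
                  then Complex.normSq (V k c) else 0)) =
              ((w i : ℝ))⁻¹ * Complex.normSq (x a) *
                ∑ k : Fin n₂, if (j : ℕ) + (k : ℕ) = (i : ℕ)
                  then ∑ c : Fin r, Complex.normSq (V k c) else 0 := by
            intro j a
            rw [← Finset.mul_sum, Finset.sum_comm]
            congr 1
            refine Finset.sum_congr rfl fun k _ => ?_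
            split <;> simp
          simp only [hstep]
          rw [Finset.sum_comm, mul_assoc, Finset.sum_mul]
          refine Finset.sum_congr rfl fun a _ => ?_
          rw [Finset.mul_sum, Finset.mul_sum]
          refine Finset.sum_congr rfl fun j _ => ?_
          ring
  refine ⟨hEq, ?_⟩
  -- nonnegativity of the bound
  have hB : 0 ≤ μ₁ * r / n := by
    by_cases hr : r = 0
    · simp [hr]
    · rcases Nat.eq_zero_or_pos n₂ with hn2 | hn2
      · exfalso
        have : (1 : Matrix (Fin r) (Fin r) ℂ) ⟨0, Nat.pos_of_ne_zero hr⟩ ⟨0, Nat.pos_of_ne_zero hr⟩ = 0 := by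
          rw [← hVorth, Matrix.mul_apply]
          subst hn2
          simp
        simp [Matrix.one_apply] at this
      · exact le_trans (Finset.sum_nonneg fun c _ => Complex.normSq_nonneg _) (hV ⟨0, hn2⟩)
  have hx : 0 ≤ ∑ a, Complex.normSq (x a) :=
    Finset.sum_nonneg fun a _ => Complex.normSq_nonneg _
  rw [hEq]
  have hT : ∑ j : Fin n₁, ∑ k : Fin n₂,
      (if (j : ℕ) + (k : ℕ) = (i : ℕ) then ∑ c : Fin r, Complex.normSq (V k c) else 0)
      ≤ (w i : ℝ) * (μ₁ * r / n) := by
    have : ∑ j : Fin n₁, ∑ k : Fin n₂,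
        (if (j : ℕ) + (k : ℕ) = (i : ℕ) then ∑ c : Fin r, Complex.normSq (V k c) else 0)
        ≤ ∑ j : Fin n₁, ∑ k : Fin n₂,
        (if (j : ℕ) + (k : ℕ) = (i : ℕ) then μ₁ * r / n else 0) := by
      refine Finset.sum_le_sum fun j _ => Finset.sum_le_sum fun k _ => ?_
      split
      · exact hV k
      · exact le_rfl
    refine this.trans (le_of_eq ?_)
    calc ∑ j : Fin n₁, ∑ k : Fin n₂,
          (if (j : ℕ) + (k : ℕ) = (i : ℕ) then μ₁ * r / n else 0)
        = ∑ p : Fin n₁ × Fin n₂,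
            (if (p.1 : ℕ) + (p.2 : ℕ) = (i : ℕ) then μ₁ * r / n else 0) := by
          rw [Fintype.sum_prod_type]
      _ = (w i : ℝ) * (μ₁ * r / n) := by
          rw [Finset.sum_ite, Finset.sum_const, Finset.sum_const_zero, add_zero,
            nsmul_eq_mul, ← hw i]
  calc (∑ a, Complex.normSq (x a)) * ((w i : ℝ))⁻¹ *
        (∑ j : Fin n₁, ∑ k : Fin n₂,
          if (j : ℕ) + (k : ℕ) = (i : ℕ) then ∑ c : Fin r, Complex.normSq (V k c) else 0)
      ≤ (∑ a, Complex.normSq (x a)) * ((w i : ℝ))⁻¹ * ((w i : ℝ) * (μ₁ * r / n)) := by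
        refine mul_le_mul_of_nonneg_left hT (by positivity)
    _ ≤ (∑ a, Complex.normSq (x a)) * (μ₁ * r / n) := by
        rcases Nat.eq_zero_or_pos (w i) with hwi | hwi
        · simp only [hwi, Nat.cast_zero, _root_.inv_zero, mul_zero, zero_mul]
          exact mul_nonneg hx hB
        · rw [mul_assoc, ← mul_assoc ((w i : ℝ))⁻¹]
          rw [inv_mul_cancel₀ (by exact_mod_cast hwi.ne')]
          simp
end

section
/- Let T be the tangent space at U V* , i.e. P_T(Z) = U U* Z + Z V V* − U U* Z V V*, where U and V have orthonormal columns. Suppose max_j ‖U_j‖_F² ≤ μ₁r/n (over s×r row-blocks of U) and max_k ‖e_kᵀ V‖₂² ≤ μ₁r/n. Then for any x ∈ ℂ^s and any i, ‖P_T G(x e_iᵀ)‖_F² ≤ 2‖x‖₂² μ₁r/n. -/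
open Matrix

private lemma normSq_sum_ite_s13 {α : Type*} [Fintype α] (p : α → Prop) [DecidablePred p]
    (h : ∀ a b, p a → p b → a = b) (f : α → ℂ) :
    Complex.normSq (∑ a, if p a then f a else 0) =
      ∑ a, if p a then Complex.normSq (f a) else 0 := by
  classical
  rw [← Finset.sum_filter, ← Finset.sum_filter]
  rcases (Finset.univ.filter p).eq_empty_or_nonempty with he | hne
  · simp [he]
  · obtain ⟨a, ha⟩ := hne
    have hpa : p a := (Finset.mem_filter.mp ha).2
    have hfil : Finset.univ.filter p = {a} := by
      ext b
      simp only [Finset.mem_filter, Finset.mem_univ, true_and, Finset.mem_singleton]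
      exact ⟨fun hb => h b a hb hpa, fun hb => hb ▸ hpa⟩
    simp [hfil]

private lemma normSq_sum_mul_le {s : ℕ} (u v : Fin s → ℂ) :
    Complex.normSq (∑ a, u a * v a) ≤
      (∑ a, Complex.normSq (u a)) * ∑ a, Complex.normSq (v a) := by
  have h1 : ‖∑ a, u a * v a‖ ≤ ∑ a, ‖u a‖ * ‖v a‖ :=
    (norm_sum_le _ _).trans_eq (Finset.sum_congr rfl fun a _ => norm_mul _ _)
  have h2 := Finset.sum_mul_sq_le_sq_mul_sq Finset.univ (fun a => ‖u a‖) (fun a => ‖v a‖)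
  calc Complex.normSq (∑ a, u a * v a) = ‖∑ a, u a * v a‖ ^ 2 := by
        rw [← Complex.sq_norm]
    _ ≤ (∑ a, ‖u a‖ * ‖v a‖) ^ 2 :=
        pow_le_pow_left₀ (norm_nonneg _) h1 2
    _ ≤ (∑ a, ‖u a‖^2) * (∑ a, ‖v a‖^2) := h2
    _ = _ := by
        congr 1 <;> exact Finset.sum_congr rfl fun a _ => by
          rw [← Complex.sq_norm]

private def frob {a b : Type*} [Fintype a] [Fintype b] (A : Matrix a b ℂ) : ℝ :=
  ∑ p, ∑ k, Complex.normSq (A p k)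

private lemma frob_nonneg {a b : Type*} [Fintype a] [Fintype b] (A : Matrix a b ℂ) :
    0 ≤ frob A :=
  Finset.sum_nonneg fun _ _ => Finset.sum_nonneg fun _ _ => Complex.normSq_nonneg _

private lemma frob_cast {a b : Type*} [Fintype a] [Fintype b] (A : Matrix a b ℂ) :
    ((frob A : ℝ) : ℂ) = Matrix.trace (Aᴴ * A) := by
  rw [frob, Matrix.trace]
  push_cast
  rw [Finset.sum_comm]
  refine Finset.sum_congr rfl fun k _ => ?_
  rw [Matrix.diag_apply, Matrix.mul_apply]
  refine Finset.sum_congr rfl fun p _ => ?_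
  rw [Matrix.conjTranspose_apply]
  exact Complex.normSq_eq_conj_mul_self.symm ▸ rfl

private lemma frob_U_mul {a b c : Type*} [Fintype a] [Fintype b] [Fintype c] [DecidableEq b]
    (U : Matrix a b ℂ) (hU : Uᴴ * U = 1) (A : Matrix b c ℂ) :
    frob (U * A) = frob A := by
  have h := frob_cast (U * A)
  rw [conjTranspose_mul, Matrix.mul_assoc, ← Matrix.mul_assoc Uᴴ, hU, Matrix.one_mul,
    ← frob_cast A] at h
  exact_mod_cast h

private lemma frob_mul_Vt {a b c : Type*} [Fintype a] [Fintype b] [Fintype c] [DecidableEq b]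
    (V : Matrix c b ℂ) (hV : Vᴴ * V = 1) (B : Matrix a b ℂ) :
    frob (B * Vᴴ) = frob B := by
  have h := frob_cast (B * Vᴴ)
  have e : (B * Vᴴ)ᴴ * (B * Vᴴ) = V * (Bᴴ * B) * Vᴴ := by
    rw [conjTranspose_mul, conjTranspose_conjTranspose]
    simp only [Matrix.mul_assoc]
  rw [e, Matrix.trace_mul_comm, ← Matrix.mul_assoc, hV, Matrix.one_mul, ← frob_cast B] at h
  exact_mod_cast h

private lemma frob_add_orth {a b : Type*} [Fintype a] [Fintype b]
    (X Y : Matrix a b ℂ) (h : Xᴴ * Y = 0) :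
    frob (X + Y) = frob X + frob Y := by
  have hYX : Yᴴ * X = 0 := by
    have h2 := congrArg conjTranspose h
    rwa [conjTranspose_mul, conjTranspose_conjTranspose, conjTranspose_zero] at h2
  have hc := frob_cast (X + Y)
  rw [conjTranspose_add, Matrix.add_mul, Matrix.mul_add, Matrix.mul_add, h, hYX,
    add_zero, zero_add, Matrix.trace_add, ← frob_cast X, ← frob_cast Y] at hc
  exact_mod_cast hc

private lemma sum_ite_const {β γ : Type*} [Fintype β] [Fintype γ]
    (p : β → γ → Prop) [∀ b c, Decidable (p b c)] (C : ℝ) :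
    ∑ b, ∑ c, (if p b c then C else 0) = C * ∑ b, ∑ c, (if p b c then (1:ℝ) else 0) := by
  rw [Finset.mul_sum]
  refine Finset.sum_congr rfl fun b _ => ?_
  rw [Finset.mul_sum]
  refine Finset.sum_congr rfl fun c _ => ?_
  split_ifs <;> simp


/-- For the tangent-space projection `P_T` at `U V*` with incoherent factors,
`‖P_T G(x e_iᵀ)‖_F² ≤ 2 ‖x‖₂² μ₁ r / n`. -/
theorem tangent_projection_hankel_atom_bound {s n n₁ n₂ r : ℕ}
    (hn : n₁ + n₂ = n + 1) (μ₁ : ℝ)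
    (w : Fin n → ℕ)
    (hw : ∀ i, w i = (Finset.univ.filter
      (fun p : Fin n₁ × Fin n₂ => (p.1 : ℕ) + (p.2 : ℕ) = (i : ℕ))).card)
    (i : Fin n) (x : Fin s → ℂ)
    (U : Matrix (Fin n₁ × Fin s) (Fin r) ℂ) (hUorth : Uᴴ * U = 1)
    (V : Matrix (Fin n₂) (Fin r) ℂ) (hVorth : Vᴴ * V = 1)
    (hU : ∀ j : Fin n₁,
      ∑ a : Fin s, ∑ c : Fin r, Complex.normSq (U (j, a) c) ≤ μ₁ * r / n)
    (hV : ∀ k : Fin n₂, ∑ c : Fin r, Complex.normSq (V k c) ≤ μ₁ * r / n)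
    (PT : Matrix (Fin n₁ × Fin s) (Fin n₂) ℂ → Matrix (Fin n₁ × Fin s) (Fin n₂) ℂ)
    (hPT : ∀ Z, PT Z = U * Uᴴ * Z + Z * V * Vᴴ - U * Uᴴ * Z * V * Vᴴ)
    (M : Matrix (Fin n₁ × Fin s) (Fin n₂) ℂ)
    (hM : M = Matrix.of fun (p : Fin n₁ × Fin s) (k : Fin n₂) =>
      (if (p.1 : ℕ) + (k : ℕ) = (i : ℕ)
        then (Complex.ofReal (Real.sqrt (w i)))⁻¹ else 0) * x p.2) :
    ∑ p, ∑ k, Complex.normSq (PT M p k) ≤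
      2 * (∑ a, Complex.normSq (x a)) * (μ₁ * r / n) := by
  classical
  have hXnn : 0 ≤ ∑ a, Complex.normSq (x a) :=
    Finset.sum_nonneg fun _ _ => Complex.normSq_nonneg _
  have hμ : 0 ≤ μ₁ * r / n := by
    rcases Nat.eq_zero_or_pos n₂ with h2 | h2
    · have h1 : 0 < n₁ := by omega
      exact le_trans (Finset.sum_nonneg fun _ _ => Finset.sum_nonneg fun _ _ =>
        Complex.normSq_nonneg _) (hU ⟨0, h1⟩)
    · exact le_trans (Finset.sum_nonneg fun _ _ => Complex.normSq_nonneg _) (hV ⟨0, h2⟩)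
  have hRHS : 0 ≤ 2 * (∑ a, Complex.normSq (x a)) * (μ₁ * r / n) := by
    have := mul_nonneg (mul_nonneg (by norm_num : (0:ℝ) ≤ 2) hXnn) hμ
    linarith
  rcases Nat.eq_zero_or_pos n₁ with h1 | h1
  · subst h1
    haveI : IsEmpty (Fin 0 × Fin s) := by infer_instance
    rw [Finset.univ_eq_empty, Finset.sum_empty]
    exact hRHS
  rcases Nat.eq_zero_or_pos n₂ with h2 | h2
  · subst h2
    haveI : IsEmpty (Fin 0) := by infer_instance
    calc ∑ p, ∑ k, Complex.normSq (PT M p k) = 0 := by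
          refine Finset.sum_eq_zero fun p _ => ?_
          rw [Finset.univ_eq_empty, Finset.sum_empty]
      _ ≤ _ := hRHS
  -- main case
  set t : ℂ := (Complex.ofReal (Real.sqrt (w i)))⁻¹ with htdef
  have hi := i.isLt
  have hiw : 0 < w i := by
    rw [hw, Finset.card_pos]
    by_cases hcase : (i : ℕ) < n₁
    · exact ⟨(⟨i, hcase⟩, ⟨0, h2⟩), by simp⟩
    · refine ⟨(⟨n₁ - 1, by omega⟩, ⟨(i : ℕ) - (n₁ - 1), by omega⟩), ?_⟩
      simp only [Finset.mem_filter, Finset.mem_univ, true_and]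
      show (n₁ - 1) + ((i : ℕ) - (n₁ - 1)) = (i : ℕ)
      omega
  have ht2 : Complex.normSq t = ((w i : ℝ))⁻¹ := by
    rw [htdef, map_inv₀, Complex.normSq_ofReal,
      Real.mul_self_sqrt (by positivity)]
  have htw : Complex.normSq t * (w i : ℝ) = 1 := by
    rw [ht2]
    exact inv_mul_cancel₀ (by exact_mod_cast hiw.ne')
  have hcount : ∑ k : Fin n₂, ∑ j : Fin n₁,
      (if (j : ℕ) + (k : ℕ) = (i : ℕ) then (1:ℝ) else 0) = (w i : ℝ) := by
    rw [hw, Finset.card_filter]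
    push_cast
    rw [Fintype.sum_prod_type]
    exact Finset.sum_comm
  set X : ℝ := ∑ a, Complex.normSq (x a) with hXdef
  set m : ℝ := μ₁ * r / n with hmdef
  -- Part B : `frob (Uᴴ * M) ≤ X * m`
  have hUM : ∀ (c : Fin r) (k : Fin n₂), (Uᴴ * M) c k =
      ∑ j : Fin n₁, if (j : ℕ) + (k : ℕ) = (i : ℕ)
        then t * ∑ a, star (U (j, a) c) * x a else 0 := by
    intro c k
    rw [Matrix.mul_apply, Fintype.sum_prod_type]
    refine Finset.sum_congr rfl fun j _ => ?_
    by_cases hc : (j : ℕ) + (k : ℕ) = (i : ℕ)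
    · simp only [hc, if_true, hM, Matrix.of_apply, Matrix.conjTranspose_apply, Finset.mul_sum]
      exact Finset.sum_congr rfl fun a _ => by ring
    · simp [hc, hM, Matrix.conjTranspose_apply]
  have hB : frob (Uᴴ * M) ≤ X * m := by
    have huniq : ∀ (k : Fin n₂) (a b : Fin n₁),
        (a : ℕ) + (k : ℕ) = (i : ℕ) → (b : ℕ) + (k : ℕ) = (i : ℕ) → a = b :=
      fun k a b ha hb => Fin.ext (by omega)
    have e1 : frob (Uᴴ * M) = ∑ c : Fin r, ∑ k : Fin n₂, ∑ j : Fin n₁,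
        (if (j : ℕ) + (k : ℕ) = (i : ℕ) then
          Complex.normSq t * Complex.normSq (∑ a, star (U (j, a) c) * x a) else 0) := by
      refine Finset.sum_congr rfl fun c _ => Finset.sum_congr rfl fun k _ => ?_
      rw [hUM c k, normSq_sum_ite_s13 _ (huniq k) _]
      refine Finset.sum_congr rfl fun j _ => ?_
      by_cases hc : (j : ℕ) + (k : ℕ) = (i : ℕ) <;> simp [hc, Complex.normSq_mul]
    have e2 : ∑ c : Fin r, ∑ k : Fin n₂, ∑ j : Fin n₁,
        (if (j : ℕ) + (k : ℕ) = (i : ℕ) then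
          Complex.normSq t * Complex.normSq (∑ a, star (U (j, a) c) * x a) else 0)
        = ∑ k : Fin n₂, ∑ j : Fin n₁,
        (if (j : ℕ) + (k : ℕ) = (i : ℕ) then
          Complex.normSq t * ∑ c : Fin r,
            Complex.normSq (∑ a, star (U (j, a) c) * x a) else 0) := by
      rw [Finset.sum_comm]
      refine Finset.sum_congr rfl fun k _ => ?_
      rw [Finset.sum_comm]
      refine Finset.sum_congr rfl fun j _ => ?_
      split_ifs with hc
      · rw [Finset.mul_sum]
      · simp
    have e3 : ∑ k : Fin n₂, ∑ j : Fin n₁,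
        (if (j : ℕ) + (k : ℕ) = (i : ℕ) then
          Complex.normSq t * ∑ c : Fin r,
            Complex.normSq (∑ a, star (U (j, a) c) * x a) else 0)
        ≤ ∑ k : Fin n₂, ∑ j : Fin n₁,
        (if (j : ℕ) + (k : ℕ) = (i : ℕ) then Complex.normSq t * (m * X) else 0) := by
      refine Finset.sum_le_sum fun k _ => Finset.sum_le_sum fun j _ => ?_
      split_ifs with hc
      · refine mul_le_mul_of_nonneg_left ?_ (Complex.normSq_nonneg t)
        calc ∑ c : Fin r, Complex.normSq (∑ a, star (U (j, a) c) * x a)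
            ≤ ∑ c : Fin r, (∑ a, Complex.normSq (star (U (j, a) c)))
                * ∑ a, Complex.normSq (x a) :=
              Finset.sum_le_sum fun c _ =>
                normSq_sum_mul_le (fun a => star (U (j, a) c)) x
          _ = (∑ a, ∑ c : Fin r, Complex.normSq (U (j, a) c)) * X := by
              rw [← Finset.sum_mul, Finset.sum_comm, ← hXdef]
              congr 1
              exact Finset.sum_congr rfl fun a _ =>
                Finset.sum_congr rfl fun c _ => by simp
          _ ≤ m * X := mul_le_mul_of_nonneg_right (hU j) hXnn
      · exact le_refl 0
    have e4 : ∑ k : Fin n₂, ∑ j : Fin n₁,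
        (if (j : ℕ) + (k : ℕ) = (i : ℕ) then Complex.normSq t * (m * X) else 0)
        = X * m := by
      rw [sum_ite_const (fun (k : Fin n₂) (j : Fin n₁) => (j : ℕ) + (k : ℕ) = (i : ℕ)),
        hcount]
      have h5 : Complex.normSq t * (m * X) * (w i : ℝ)
          = (Complex.normSq t * (w i : ℝ)) * (m * X) := by ring
      rw [h5, htw, one_mul, mul_comm]
    rw [e1, e2, ← e4]
    exact e3
  -- Part C : `frob (M * V) ≤ X * m`
  have hMV : ∀ (p : Fin n₁ × Fin s) (c : Fin r), (M * V) p c =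
      ∑ k : Fin n₂, if (p.1 : ℕ) + (k : ℕ) = (i : ℕ) then t * x p.2 * V k c else 0 := by
    intro p c
    rw [Matrix.mul_apply]
    refine Finset.sum_congr rfl fun k _ => ?_
    by_cases hc : (p.1 : ℕ) + (k : ℕ) = (i : ℕ)
    · simp only [hc, if_true, hM, Matrix.of_apply]
    · simp [hc, hM]
  have hC : frob (M * V) ≤ X * m := by
    have huniq : ∀ (j : Fin n₁) (a b : Fin n₂),
        (j : ℕ) + (a : ℕ) = (i : ℕ) → (j : ℕ) + (b : ℕ) = (i : ℕ) → a = b :=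
      fun j a b ha hb => Fin.ext (by omega)
    have e1 : frob (M * V) = ∑ j : Fin n₁, ∑ a : Fin s, ∑ c : Fin r, ∑ k : Fin n₂,
        (if (j : ℕ) + (k : ℕ) = (i : ℕ) then
          (Complex.normSq t * Complex.normSq (x a)) * Complex.normSq (V k c) else 0) := by
      rw [frob, Fintype.sum_prod_type]
      refine Finset.sum_congr rfl fun j _ => Finset.sum_congr rfl fun a _ =>
        Finset.sum_congr rfl fun c _ => ?_
      rw [hMV (j, a) c, normSq_sum_ite_s13 _ (huniq j) _]
      refine Finset.sum_congr rfl fun k _ => ?_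
      by_cases hc : (j : ℕ) + (k : ℕ) = (i : ℕ) <;> simp [hc, Complex.normSq_mul]
    have e2 : ∑ j : Fin n₁, ∑ a : Fin s, ∑ c : Fin r, ∑ k : Fin n₂,
        (if (j : ℕ) + (k : ℕ) = (i : ℕ) then
          (Complex.normSq t * Complex.normSq (x a)) * Complex.normSq (V k c) else 0)
        = ∑ j : Fin n₁, ∑ a : Fin s, ∑ k : Fin n₂,
        (if (j : ℕ) + (k : ℕ) = (i : ℕ) then
          (Complex.normSq t * Complex.normSq (x a)) * ∑ c : Fin r, Complex.normSq (V k c)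
         else 0) := by
      refine Finset.sum_congr rfl fun j _ => Finset.sum_congr rfl fun a _ => ?_
      rw [Finset.sum_comm]
      refine Finset.sum_congr rfl fun k _ => ?_
      split_ifs with hc
      · rw [Finset.mul_sum]
      · simp
    have e3 : ∑ j : Fin n₁, ∑ a : Fin s, ∑ k : Fin n₂,
        (if (j : ℕ) + (k : ℕ) = (i : ℕ) then
          (Complex.normSq t * Complex.normSq (x a)) * ∑ c : Fin r, Complex.normSq (V k c)
         else 0)
        ≤ ∑ j : Fin n₁, ∑ a : Fin s, ∑ k : Fin n₂,
        (if (j : ℕ) + (k : ℕ) = (i : ℕ) then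
          (Complex.normSq t * Complex.normSq (x a)) * m else 0) := by
      refine Finset.sum_le_sum fun j _ => Finset.sum_le_sum fun a _ =>
        Finset.sum_le_sum fun k _ => ?_
      split_ifs with hc
      · exact mul_le_mul_of_nonneg_left (hV k)
          (mul_nonneg (Complex.normSq_nonneg t) (Complex.normSq_nonneg (x a)))
      · exact le_refl 0
    have e4 : ∑ j : Fin n₁, ∑ a : Fin s, ∑ k : Fin n₂,
        (if (j : ℕ) + (k : ℕ) = (i : ℕ) then
          (Complex.normSq t * Complex.normSq (x a)) * m else 0)
        = ∑ a : Fin s, Complex.normSq (x a) * (∑ j : Fin n₁, ∑ k : Fin n₂,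
          (if (j : ℕ) + (k : ℕ) = (i : ℕ) then Complex.normSq t * m else 0)) := by
      rw [Finset.sum_comm]
      refine Finset.sum_congr rfl fun a _ => ?_
      rw [Finset.mul_sum]
      refine Finset.sum_congr rfl fun j _ => ?_
      rw [Finset.mul_sum]
      refine Finset.sum_congr rfl fun k _ => ?_
      split_ifs with hc
      · ring
      · simp
    have e5 : ∑ j : Fin n₁, ∑ k : Fin n₂,
        (if (j : ℕ) + (k : ℕ) = (i : ℕ) then Complex.normSq t * m else 0)
        = m := by
      rw [sum_ite_const (fun (j : Fin n₁) (k : Fin n₂) => (j : ℕ) + (k : ℕ) = (i : ℕ)),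
        Finset.sum_comm, hcount]
      have h5 : Complex.normSq t * m * (w i : ℝ)
          = (Complex.normSq t * (w i : ℝ)) * m := by ring
      rw [h5, htw, one_mul]
    have e6 : ∑ a : Fin s, Complex.normSq (x a) * m = X * m := by
      rw [hXdef, Finset.sum_mul]
    rw [e1, e2]
    refine e3.trans (le_of_eq ?_)
    rw [e4, e5]
    exact e6
  -- Part A : orthogonal decomposition
  set Q : Matrix (Fin n₁ × Fin s) (Fin n₁ × Fin s) ℂ := U * Uᴴ with hQ
  have hQQ : Q * Q = Q := by
    rw [hQ, Matrix.mul_assoc, ← Matrix.mul_assoc Uᴴ, hUorth, Matrix.one_mul]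
  have hQH : Qᴴ = Q := by rw [hQ, conjTranspose_mul, conjTranspose_conjTranspose]
  set R : Matrix (Fin n₁ × Fin s) (Fin n₂) ℂ := M * V * Vᴴ with hR
  have horthgen : ∀ B : Matrix (Fin n₁ × Fin s) (Fin n₂) ℂ,
      (Q * B)ᴴ * (R - Q * R) = 0 := by
    intro B
    rw [conjTranspose_mul, hQH, Matrix.mul_assoc, Matrix.mul_sub,
      ← Matrix.mul_assoc Q Q R, hQQ, sub_self, Matrix.mul_zero]
  have hdecomp : PT M = Q * M + (R - Q * R) := by
    rw [hPT, hQ, hR]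
    simp only [Matrix.mul_assoc]
    abel
  have hFP : frob (PT M) = frob (Q * M) + frob (R - Q * R) := by
    rw [hdecomp]
    exact frob_add_orth _ _ (horthgen M)
  have hFR : frob R = frob (Q * R) + frob (R - Q * R) := by
    have hRe : R = Q * R + (R - Q * R) := by abel
    conv_lhs => rw [hRe]
    exact frob_add_orth _ _ (horthgen R)
  have hQM : frob (Q * M) = frob (Uᴴ * M) := by
    rw [hQ, Matrix.mul_assoc]
    exact frob_U_mul U hUorth (Uᴴ * M)
  have hRMV : frob R = frob (M * V) := by
    rw [hR]
    exact frob_mul_Vt V hVorth (M * V)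
  have hfinal : frob (PT M) ≤ frob (Uᴴ * M) + frob (M * V) := by
    have h0 := frob_nonneg (Q * R)
    rw [hFP, hQM]
    have hsub : frob (R - Q * R) ≤ frob (M * V) := by
      rw [← hRMV, hFR]; linarith
    linarith
  show frob (PT M) ≤ 2 * X * m
  linarith
end

section
/- With P_T as above and the incoherence bounds max_j ‖U_j‖_F² ≤ μ₁r/n, max_k ‖e_kᵀ V‖₂² ≤ μ₁r/n, for any fixed W ∈ ℂ^{sn₁×n₂} and any i ∈ {0,…,n-1}: ‖G* P_T(W) e_i‖₂ ≤ ‖W‖_F · √(2μ₁r/n). -/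
open Matrix Complex Finset



lemma cs_complex {ι : Type*} [Fintype ι] (f g : ι → ℂ) :
    Complex.normSq (∑ a, f a * g a) ≤ (∑ a, Complex.normSq (f a)) * (∑ a, Complex.normSq (g a)) := by
  have h1 : ‖∑ a, f a * g a‖ ≤ ∑ a, ‖f a‖ * ‖g a‖ := by
    refine (norm_sum_le _ _).trans_eq ?_
    simp [norm_mul]
  have h2 := Finset.sum_mul_sq_le_sq_mul_sq Finset.univ (fun a => ‖f a‖) (fun a => ‖g a‖)
  calc Complex.normSq (∑ a, f a * g a) = (‖∑ a, f a * g a‖)^2 := (Complex.sq_norm _).symm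
    _ ≤ (∑ a, ‖f a‖ * ‖g a‖)^2 := by
        apply pow_le_pow_left₀ (norm_nonneg _) h1
    _ ≤ (∑ a, ‖f a‖ ^2) * (∑ a, ‖g a‖^2) := h2
    _ = _ := by simp [Complex.sq_norm]

lemma count1 {n₁ n₂ : ℕ} (ival : ℕ) :
    ∑ k : Fin n₂, (Finset.univ.filter (fun j : Fin n₁ => (j:ℕ)+(k:ℕ)=ival)).card
      = (Finset.univ.filter (fun p : Fin n₁ × Fin n₂ => (p.1:ℕ)+(p.2:ℕ)=ival)).card := by
  simp only [Finset.card_filter]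
  rw [Fintype.sum_prod_type]
  exact Finset.sum_comm

lemma count2 {n₁ n₂ : ℕ} (ival : ℕ) :
    ∑ j : Fin n₁, (Finset.univ.filter (fun k : Fin n₂ => (j:ℕ)+(k:ℕ)=ival)).card
      = (Finset.univ.filter (fun p : Fin n₁ × Fin n₂ => (p.1:ℕ)+(p.2:ℕ)=ival)).card := by
  simp only [Finset.card_filter]
  rw [Fintype.sum_prod_type]

lemma abs_trace_le {m k : Type*} [Fintype m] [Fintype k] (D W : Matrix m k ℂ) :
    ‖(Dᴴ * W).trace‖ ≤
      Real.sqrt (∑ p, ∑ q, Complex.normSq (D p q)) *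
        Real.sqrt (∑ p, ∑ q, Complex.normSq (W p q)) := by
  have h1 : ‖(Dᴴ * W).trace‖ ≤ ∑ p, ∑ q, ‖D p q‖ * ‖W p q‖ := by
    simp only [Matrix.trace, Matrix.diag, Matrix.mul_apply, Matrix.conjTranspose_apply]
    refine le_trans (norm_sum_le _ _) ?_
    refine le_trans (Finset.sum_le_sum (fun q _ => norm_sum_le _ _)) ?_
    rw [Finset.sum_comm]
    refine le_of_eq (Finset.sum_congr rfl (fun p _ => Finset.sum_congr rfl (fun q _ => ?_)))
    rw [norm_mul]
    rw [show star (D p q) = (starRingEnd ℂ) (D p q) from rfl, Complex.norm_conj]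
  have h2 : (∑ p, ∑ q, ‖D p q‖ * ‖W p q‖)^2 ≤
      (∑ p, ∑ q, Complex.normSq (D p q)) * (∑ p, ∑ q, Complex.normSq (W p q)) := by
    have h := Finset.sum_mul_sq_le_sq_mul_sq Finset.univ
      (fun z : m × k => ‖D z.1 z.2‖) (fun z : m × k => ‖W z.1 z.2‖)
    simpa [Fintype.sum_prod_type, Complex.sq_norm] using h
  have hnn : (0:ℝ) ≤ ∑ p, ∑ q, ‖D p q‖ * ‖W p q‖ :=
    Finset.sum_nonneg fun _ _ => Finset.sum_nonneg fun _ _ =>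
      mul_nonneg (norm_nonneg _) (norm_nonneg _)
  calc ‖(Dᴴ * W).trace‖ ≤ ∑ p, ∑ q, ‖D p q‖ * ‖W p q‖ := h1
    _ = Real.sqrt ((∑ p, ∑ q, ‖D p q‖ * ‖W p q‖)^2) :=
        (Real.sqrt_sq hnn).symm
    _ ≤ Real.sqrt ((∑ p, ∑ q, Complex.normSq (D p q)) * (∑ p, ∑ q, Complex.normSq (W p q))) :=
        Real.sqrt_le_sqrt h2
    _ = _ := Real.sqrt_mul (Finset.sum_nonneg fun _ _ => Finset.sum_nonneg fun _ _ =>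
        Complex.normSq_nonneg _) _

lemma Ubound {s n₁ n₂ r : ℕ} (ival : ℕ) (wv : ℝ) (hwv : 0 < wv)
    (t : ℂ) (hts : Complex.normSq t = wv⁻¹)
    (K : ℝ) (c : Fin s → ℂ) (U : Matrix (Fin n₁ × Fin s) (Fin r) ℂ)
    (hU : ∀ j : Fin n₁, ∑ a : Fin s, ∑ ρ : Fin r, Complex.normSq (U (j,a) ρ) ≤ K)
    (hcnt : ((∑ k : Fin n₂,
      (Finset.univ.filter (fun j : Fin n₁ => (j:ℕ)+(k:ℕ)=ival)).card : ℕ) : ℝ) = wv) :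
    ∑ ρ : Fin r, ∑ k : Fin n₂, Complex.normSq
        ((Uᴴ * Matrix.of (fun (p : Fin n₁ × Fin s) (k : Fin n₂) =>
          if (p.1:ℕ)+(k:ℕ)=ival then t * c p.2 else 0)) ρ k)
      ≤ K * ∑ a, Complex.normSq (c a) := by
  set Z : Matrix (Fin n₁ × Fin s) (Fin n₂) ℂ := Matrix.of (fun (p : Fin n₁ × Fin s) (k : Fin n₂) =>
          if (p.1:ℕ)+(k:ℕ)=ival then t * c p.2 else 0) with hZ
  set N : ℝ := ∑ a, Complex.normSq (c a) with hN
  have hN0 : 0 ≤ N := Finset.sum_nonneg fun _ _ => Complex.normSq_nonneg _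
  set S : Fin n₂ → Finset (Fin n₁) :=
    fun k => Finset.univ.filter (fun j : Fin n₁ => (j:ℕ)+(k:ℕ)=ival) with hS
  have hentry : ∀ (ρ : Fin r) (k : Fin n₂),
      (Uᴴ * Z) ρ k = t * ∑ j ∈ S k, (∑ a, star (U (j,a) ρ) * c a) := by
    intro ρ k
    rw [Matrix.mul_apply, Fintype.sum_prod_type]
    calc ∑ j : Fin n₁, ∑ a : Fin s, Uᴴ ρ (j,a) * Z (j,a) k
        = ∑ j : Fin n₁, (if (j:ℕ)+(k:ℕ)=ival then t * ∑ a, star (U (j,a) ρ) * c a else 0) := by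
          refine Finset.sum_congr rfl (fun j _ => ?_)
          by_cases hcond : (j:ℕ)+(k:ℕ)=ival
          · simp only [hZ, Matrix.of_apply, hcond, if_true, Matrix.conjTranspose_apply,
              Finset.mul_sum]
            refine Finset.sum_congr rfl (fun a _ => ?_)
            ring
          · simp [hZ, hcond]
      _ = ∑ j ∈ S k, (t * ∑ a, star (U (j,a) ρ) * c a) := (Finset.sum_filter _ _).symm
      _ = t * ∑ j ∈ S k, (∑ a, star (U (j,a) ρ) * c a) := (Finset.mul_sum _ _ _).symm
  have hk : ∀ k : Fin n₂, ∑ ρ : Fin r, Complex.normSq ((Uᴴ * Z) ρ k)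
      ≤ ((S k).card : ℝ) * (wv⁻¹ * (K * N)) := by
    intro k
    rcases Finset.eq_empty_or_nonempty (S k) with he | hne
    · simp [hentry, he]
    · have hcard : (S k).card = 1 := by
        refine le_antisymm (Finset.card_le_one.mpr ?_) hne.card_pos
        intro a ha b hb
        simp only [hS, Finset.mem_filter] at ha hb
        exact Fin.ext (by omega)
      obtain ⟨j₀, hj₀⟩ := Finset.card_eq_one.mp hcard
      calc ∑ ρ : Fin r, Complex.normSq ((Uᴴ * Z) ρ k)
          = ∑ ρ : Fin r, Complex.normSq t * Complex.normSq (∑ a, star (U (j₀,a) ρ) * c a) := by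
            refine Finset.sum_congr rfl (fun ρ _ => ?_)
            rw [hentry ρ k, hj₀, Finset.sum_singleton, _root_.map_mul]
        _ ≤ ∑ ρ : Fin r, wv⁻¹ * ((∑ a, Complex.normSq (U (j₀,a) ρ)) * N) := by
            refine Finset.sum_le_sum (fun ρ _ => ?_)
            rw [hts]
            refine mul_le_mul_of_nonneg_left ?_ (inv_nonneg.2 hwv.le)
            have h := cs_complex (fun a => star (U (j₀,a) ρ)) c
            simpa using h
        _ = wv⁻¹ * ((∑ ρ : Fin r, ∑ a, Complex.normSq (U (j₀,a) ρ)) * N) := by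
            rw [← Finset.mul_sum, ← Finset.sum_mul]
        _ ≤ wv⁻¹ * (K * N) := by
            refine mul_le_mul_of_nonneg_left (mul_le_mul_of_nonneg_right ?_ hN0)
              (inv_nonneg.2 hwv.le)
            rw [Finset.sum_comm]
            exact hU j₀
        _ = ((S k).card : ℝ) * (wv⁻¹ * (K * N)) := by rw [hcard]; simp
  calc ∑ ρ : Fin r, ∑ k : Fin n₂, Complex.normSq ((Uᴴ * Z) ρ k)
      = ∑ k : Fin n₂, ∑ ρ : Fin r, Complex.normSq ((Uᴴ * Z) ρ k) := Finset.sum_comm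
    _ ≤ ∑ k : Fin n₂, ((S k).card : ℝ) * (wv⁻¹ * (K * N)) := Finset.sum_le_sum (fun k _ => hk k)
    _ = wv * (wv⁻¹ * (K * N)) := by
        rw [← Finset.sum_mul, ← hcnt]
        push_cast
        ring
    _ = K * N := by
        rw [← mul_assoc, mul_inv_cancel₀ hwv.ne', one_mul]

lemma Vbound {s n₁ n₂ r : ℕ} (ival : ℕ) (wv : ℝ) (hwv : 0 < wv)
    (t : ℂ) (hts : Complex.normSq t = wv⁻¹)
    (K : ℝ) (c : Fin s → ℂ) (V : Matrix (Fin n₂) (Fin r) ℂ)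
    (hV : ∀ k : Fin n₂, ∑ ρ : Fin r, Complex.normSq (V k ρ) ≤ K)
    (hcnt : ((∑ j : Fin n₁,
      (Finset.univ.filter (fun k : Fin n₂ => (j:ℕ)+(k:ℕ)=ival)).card : ℕ) : ℝ) = wv) :
    ∑ p : Fin n₁ × Fin s, ∑ ρ : Fin r, Complex.normSq
        (((Matrix.of (fun (p : Fin n₁ × Fin s) (k : Fin n₂) =>
          if (p.1:ℕ)+(k:ℕ)=ival then t * c p.2 else 0)) * V) p ρ)
      ≤ K * ∑ a, Complex.normSq (c a) := by
  set Z : Matrix (Fin n₁ × Fin s) (Fin n₂) ℂ := Matrix.of (fun (p : Fin n₁ × Fin s) (k : Fin n₂) =>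
          if (p.1:ℕ)+(k:ℕ)=ival then t * c p.2 else 0) with hZ
  set N : ℝ := ∑ a, Complex.normSq (c a) with hN
  have hN0 : 0 ≤ N := Finset.sum_nonneg fun _ _ => Complex.normSq_nonneg _
  set T : Fin n₁ → Finset (Fin n₂) :=
    fun j => Finset.univ.filter (fun k : Fin n₂ => (j:ℕ)+(k:ℕ)=ival) with hT
  have hentry : ∀ (j : Fin n₁) (a : Fin s) (ρ : Fin r),
      (Z * V) (j,a) ρ = t * (c a * ∑ k ∈ T j, V k ρ) := by
    intro j a ρ
    rw [Matrix.mul_apply]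
    calc ∑ k : Fin n₂, Z (j,a) k * V k ρ
        = ∑ k : Fin n₂, (if (j:ℕ)+(k:ℕ)=ival then t * (c a * V k ρ) else 0) := by
          refine Finset.sum_congr rfl (fun k _ => ?_)
          by_cases hcond : (j:ℕ)+(k:ℕ)=ival
          · simp only [hZ, Matrix.of_apply, hcond, if_true]; ring
          · simp [hZ, hcond]
      _ = ∑ k ∈ T j, t * (c a * V k ρ) := (Finset.sum_filter _ _).symm
      _ = t * (c a * ∑ k ∈ T j, V k ρ) := by
          rw [Finset.mul_sum, Finset.mul_sum]
  have hj : ∀ j : Fin n₁, ∑ a : Fin s, ∑ ρ : Fin r, Complex.normSq ((Z * V) (j,a) ρ)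
      ≤ ((T j).card : ℝ) * (wv⁻¹ * (K * N)) := by
    intro j
    have hVj : ∑ ρ : Fin r, Complex.normSq (∑ k ∈ T j, V k ρ) ≤ ((T j).card : ℝ) * K := by
      rcases Finset.eq_empty_or_nonempty (T j) with he | hne
      · simp [he]
      · have hcard : (T j).card = 1 := by
          refine le_antisymm (Finset.card_le_one.mpr ?_) hne.card_pos
          intro a ha b hb
          simp only [hT, Finset.mem_filter] at ha hb
          exact Fin.ext (by omega)
        obtain ⟨k₀, hk₀⟩ := Finset.card_eq_one.mp hcard
        rw [hcard]
        simp only [hk₀, Finset.sum_singleton, Nat.cast_one, one_mul]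
        exact hV k₀
    calc ∑ a : Fin s, ∑ ρ : Fin r, Complex.normSq ((Z * V) (j,a) ρ)
        = wv⁻¹ * (N * ∑ ρ : Fin r, Complex.normSq (∑ k ∈ T j, V k ρ)) := by
          simp only [hentry, _root_.map_mul, hts]
          rw [show N * (∑ ρ : Fin r, Complex.normSq (∑ k ∈ T j, V k ρ))
              = ∑ a : Fin s, ∑ ρ : Fin r,
                Complex.normSq (c a) * Complex.normSq (∑ k ∈ T j, V k ρ) from by
            rw [hN, Finset.sum_mul_sum]]
          rw [Finset.mul_sum]
          refine Finset.sum_congr rfl (fun a _ => ?_)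
          rw [Finset.mul_sum]
      _ ≤ wv⁻¹ * (N * (((T j).card : ℝ) * K)) := by
          refine mul_le_mul_of_nonneg_left (mul_le_mul_of_nonneg_left hVj hN0)
            (inv_nonneg.2 hwv.le)
      _ = ((T j).card : ℝ) * (wv⁻¹ * (K * N)) := by ring
  calc ∑ p : Fin n₁ × Fin s, ∑ ρ : Fin r, Complex.normSq ((Z * V) p ρ)
      = ∑ j : Fin n₁, ∑ a : Fin s, ∑ ρ : Fin r, Complex.normSq ((Z * V) (j,a) ρ) := by
        rw [Fintype.sum_prod_type]
    _ ≤ ∑ j : Fin n₁, ((T j).card : ℝ) * (wv⁻¹ * (K * N)) := Finset.sum_le_sum (fun j _ => hj j)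
    _ = wv * (wv⁻¹ * (K * N)) := by
        rw [← Finset.sum_mul, ← hcnt]
        push_cast
        ring
    _ = K * N := by
        rw [← mul_assoc, mul_inv_cancel₀ hwv.ne', one_mul]



lemma e1_lemma {m k r' : Type*} [Fintype m] [Fintype k] [Fintype r'] [DecidableEq r']
    (U : Matrix m r' ℂ) (hU : Uᴴ * U = 1) (Z : Matrix m k ℂ) :
    (U*Uᴴ*Z)ᴴ * (U*Uᴴ*Z) = (Uᴴ*Z)ᴴ * (Uᴴ*Z) := by
  simp only [Matrix.conjTranspose_mul, Matrix.conjTranspose_conjTranspose, Matrix.mul_assoc]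
  rw [← Matrix.mul_assoc Uᴴ U (Uᴴ * Z), hU, Matrix.one_mul]

lemma e2_lemma {m k r' : Type*} [Fintype m] [Fintype k] [Fintype r'] [DecidableEq r']
    (V : Matrix k r' ℂ) (hV : Vᴴ * V = 1) (Z : Matrix m k ℂ) :
    ((Z*(V*Vᴴ))ᴴ * (Z*(V*Vᴴ))).trace = ((Z*V)ᴴ * (Z*V)).trace := by
  rw [show Z*(V*Vᴴ) = (Z*V)*Vᴴ from (Matrix.mul_assoc Z V Vᴴ).symm]
  rw [Matrix.conjTranspose_mul, Matrix.conjTranspose_conjTranspose]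
  rw [Matrix.mul_assoc V ((Z*V)ᴴ) ((Z*V)*Vᴴ), Matrix.trace_mul_comm V _]
  rw [Matrix.mul_assoc, Matrix.mul_assoc, hV, Matrix.mul_one]



lemma adj_lemma {m k : Type*} [Fintype m] [Fintype k]
    (P : Matrix m m ℂ) (Q : Matrix k k ℂ) (Z W : Matrix m k ℂ)
    (hPH : Pᴴ = P) (hQH : Qᴴ = Q) :
    (Zᴴ * (P*W + W*Q - P*W*Q)).trace = ((P*Z + Z*Q - P*Z*Q)ᴴ * W).trace := by
  simp only [Matrix.conjTranspose_add, Matrix.conjTranspose_sub, Matrix.conjTranspose_mul,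
    hPH, hQH, Matrix.add_mul, Matrix.sub_mul, Matrix.mul_add, Matrix.mul_sub,
    Matrix.trace_add, Matrix.trace_sub]
  congr 1
  · congr 1
    · rw [← Matrix.mul_assoc]
    · rw [← Matrix.mul_assoc Zᴴ W Q, Matrix.trace_mul_comm (Zᴴ * W) Q, Matrix.mul_assoc]
  · rw [← Matrix.mul_assoc Zᴴ (P*W) Q, Matrix.trace_mul_comm (Zᴴ * (P*W)) Q,
      Matrix.mul_assoc, ← Matrix.mul_assoc Zᴴ P W]



lemma repr_lemma {s n₁ n₂ : ℕ} (ival : ℕ) (t : ℂ) (ht : star t = t)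
    (c : Fin s → ℂ) (M : Matrix (Fin n₁ × Fin s) (Fin n₂) ℂ)
    (hca : ∀ a, c a = t * ∑ j : Fin n₁, ∑ k : Fin n₂,
      if (j:ℕ) + (k:ℕ) = ival then M (j,a) k else 0) :
    ((Matrix.of (fun (p : Fin n₁ × Fin s) (k : Fin n₂) =>
        if (p.1:ℕ) + (k:ℕ) = ival then t * c p.2 else 0))ᴴ * M).trace
      = ∑ a, star (c a) * c a := by
  simp only [Matrix.trace, Matrix.diag, Matrix.mul_apply, Matrix.conjTranspose_apply,
    Matrix.of_apply]
  calc ∑ k : Fin n₂, ∑ p : Fin n₁ × Fin s,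
        star (if (p.1:ℕ) + (k:ℕ) = ival then t * c p.2 else 0) * M p k
      = ∑ k : Fin n₂, ∑ j : Fin n₁, ∑ a : Fin s,
          (if (j:ℕ) + (k:ℕ) = ival then star (c a) * t * M (j,a) k else 0) := by
        refine Finset.sum_congr rfl (fun k _ => ?_)
        rw [Fintype.sum_prod_type]
        refine Finset.sum_congr rfl (fun j _ => Finset.sum_congr rfl (fun a _ => ?_))
        by_cases hcond : (j:ℕ) + (k:ℕ) = ival
        · simp only [hcond, if_true, star_mul', ht]
          ring
        · simp [hcond]
    _ = ∑ a : Fin s, ∑ j : Fin n₁, ∑ k : Fin n₂,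
          (if (j:ℕ) + (k:ℕ) = ival then star (c a) * t * M (j,a) k else 0) := by
        calc ∑ k : Fin n₂, ∑ j : Fin n₁, ∑ a : Fin s,
              (if (j:ℕ) + (k:ℕ) = ival then star (c a) * t * M (j,a) k else 0)
            = ∑ j : Fin n₁, ∑ k : Fin n₂, ∑ a : Fin s,
              (if (j:ℕ) + (k:ℕ) = ival then star (c a) * t * M (j,a) k else 0) :=
              Finset.sum_comm
          _ = ∑ j : Fin n₁, ∑ a : Fin s, ∑ k : Fin n₂,
              (if (j:ℕ) + (k:ℕ) = ival then star (c a) * t * M (j,a) k else 0) :=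
              Finset.sum_congr rfl (fun j _ => Finset.sum_comm)
          _ = ∑ a : Fin s, ∑ j : Fin n₁, ∑ k : Fin n₂,
              (if (j:ℕ) + (k:ℕ) = ival then star (c a) * t * M (j,a) k else 0) :=
              Finset.sum_comm
    _ = ∑ a, star (c a) * c a := by
        refine Finset.sum_congr rfl (fun a _ => ?_)
        calc ∑ j : Fin n₁, ∑ k : Fin n₂,
              (if (j:ℕ) + (k:ℕ) = ival then star (c a) * t * M (j,a) k else 0)
            = star (c a) * t * ∑ j : Fin n₁, ∑ k : Fin n₂,
                (if (j:ℕ) + (k:ℕ) = ival then M (j,a) k else 0) := by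
              simp only [Finset.mul_sum, mul_ite, mul_zero]
          _ = star (c a) * c a := by rw [mul_assoc, ← hca a]

lemma trace_hh {m n : Type*} [Fintype m] [Fintype n] (A : Matrix m n ℂ) :
    (Aᴴ * A).trace = ((∑ p, ∑ k, Complex.normSq (A p k) : ℝ) : ℂ) := by
  simp only [Matrix.trace, Matrix.diag, Matrix.mul_apply, Matrix.conjTranspose_apply]
  rw [Finset.sum_comm]
  push_cast
  congr 1; ext p; congr 1; ext k
  rw [show star (A p k) = (starRingEnd ℂ) (A p k) from rfl, ← Complex.normSq_eq_conj_mul_self]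

lemma pyth {m n : Type*} [Fintype m] [Fintype n]
    (P : Matrix m m ℂ) (Q : Matrix n n ℂ) (Z : Matrix m n ℂ)
    (hP : P * P = P) (hPH : Pᴴ = P) (hQ : Q * Q = Q) (hQH : Qᴴ = Q) :
    (P*Z + Z*Q - P*Z*Q)ᴴ * (P*Z + Z*Q - P*Z*Q) + (P*Z*Q)ᴴ * (P*Z*Q)
      = (P*Z)ᴴ * (P*Z) + (Z*Q)ᴴ * (Z*Q) := by
  have hP' : ∀ (M : Matrix m n ℂ), P * (P * M) = P * M := fun M => by
    rw [← Matrix.mul_assoc, hP]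
  have hQ' : ∀ (M : Matrix n n ℂ), Q * (Q * M) = Q * M := fun M => by
    rw [← Matrix.mul_assoc, hQ]
  simp only [Matrix.conjTranspose_sub, Matrix.conjTranspose_add, Matrix.conjTranspose_mul,
    hPH, hQH, Matrix.add_mul, Matrix.mul_add, Matrix.sub_mul, Matrix.mul_sub,
    Matrix.mul_assoc, hP', hQ']
  abel


set_option maxHeartbeats 2000000 in
/-- For any fixed `W` and any column index `i`,
`‖G* P_T(W) e_i‖₂ ≤ ‖W‖_F √(2 μ₁ r / n)`. -/
theorem Gstar_tangent_column_bound {s n n₁ n₂ r : ℕ}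
    (hn : n₁ + n₂ = n + 1) (μ₁ : ℝ)
    (w : Fin n → ℕ)
    (hw : ∀ i, w i = (Finset.univ.filter
      (fun p : Fin n₁ × Fin n₂ => (p.1 : ℕ) + (p.2 : ℕ) = (i : ℕ))).card)
    (Gstar : Matrix (Fin n₁ × Fin s) (Fin n₂) ℂ → Matrix (Fin s) (Fin n) ℂ)
    (hGstar : ∀ Z, Gstar Z = Matrix.of fun (a : Fin s) (i : Fin n) =>
      (Complex.ofReal (Real.sqrt (w i)))⁻¹ *
        ∑ j : Fin n₁, ∑ k : Fin n₂,
          if (j : ℕ) + (k : ℕ) = (i : ℕ) then Z (j, a) k else 0)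
    (U : Matrix (Fin n₁ × Fin s) (Fin r) ℂ) (hUorth : Uᴴ * U = 1)
    (V : Matrix (Fin n₂) (Fin r) ℂ) (hVorth : Vᴴ * V = 1)
    (hU : ∀ j : Fin n₁,
      ∑ a : Fin s, ∑ c : Fin r, Complex.normSq (U (j, a) c) ≤ μ₁ * r / n)
    (hV : ∀ k : Fin n₂, ∑ c : Fin r, Complex.normSq (V k c) ≤ μ₁ * r / n)
    (PT : Matrix (Fin n₁ × Fin s) (Fin n₂) ℂ → Matrix (Fin n₁ × Fin s) (Fin n₂) ℂ)
    (hPT : ∀ Z, PT Z = U * Uᴴ * Z + Z * V * Vᴴ - U * Uᴴ * Z * V * Vᴴ)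
    (W : Matrix (Fin n₁ × Fin s) (Fin n₂) ℂ) :
    ∀ i : Fin n,
      Real.sqrt (∑ a : Fin s, Complex.normSq (Gstar (PT W) a i)) ≤
        Real.sqrt (∑ p, ∑ k, Complex.normSq (W p k)) *
          Real.sqrt (2 * μ₁ * r / n) := by
  intro i
  by_cases hwi : w i = 0
  · -- degenerate: no (j,k) with j+k=i, so column is zero
    have hempty : ∀ (j : Fin n₁) (k : Fin n₂), ¬ ((j:ℕ) + (k:ℕ) = (i:ℕ)) := by
      intro j k hjk
      have h0 := hw i
      rw [hwi] at h0
      have hmem : (j,k) ∈ (Finset.univ.filter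
          (fun p : Fin n₁ × Fin n₂ => (p.1 : ℕ) + (p.2 : ℕ) = (i : ℕ))) := by
        simp [hjk]
      have h1 := Finset.card_eq_zero.mp h0.symm
      rw [h1] at hmem
      exact absurd hmem (Finset.notMem_empty _)
    have hz : ∀ a : Fin s, Gstar (PT W) a i = 0 := by
      intro a
      rw [hGstar]
      simp only [Matrix.of_apply]
      rw [Finset.sum_eq_zero, mul_zero]
      intro j _
      rw [Finset.sum_eq_zero]
      intro k _
      simp [hempty j k]
    simp only [hz]
    simp only [Complex.normSq_zero, Finset.sum_const, smul_zero, Real.sqrt_zero]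
    positivity
  · -- main case
    set K : ℝ := μ₁ * r / n with hK
    set c : Fin s → ℂ := fun a => Gstar (PT W) a i with hc
    set N : ℝ := ∑ a, Complex.normSq (c a) with hN
    set W2 : ℝ := ∑ p, ∑ k, Complex.normSq (W p k) with hW2
    set sw : ℝ := Real.sqrt (w i) with hsw
    have hwpos : (0:ℝ) < (w i : ℝ) := by
      exact_mod_cast Nat.pos_of_ne_zero hwi
    have hswpos : 0 < sw := Real.sqrt_pos.mpr hwpos
    have hsw2 : sw * sw = (w i : ℝ) := Real.mul_self_sqrt hwpos.le
    set t : ℂ := (Complex.ofReal sw)⁻¹ with htdef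
    have hts : Complex.normSq t = ((w i : ℝ))⁻¹ := by
      rw [htdef, map_inv₀, Complex.normSq_ofReal, hsw2]
    have ht : star t = t := by
      rw [htdef]
      simp [Complex.star_def, map_inv₀, Complex.conj_ofReal]
    set Z : Matrix (Fin n₁ × Fin s) (Fin n₂) ℂ := Matrix.of
      (fun (p : Fin n₁ × Fin s) (k : Fin n₂) =>
        if (p.1:ℕ) + (k:ℕ) = (i:ℕ) then t * c p.2 else 0) with hZ
    have hN0 : 0 ≤ N := Finset.sum_nonneg fun _ _ => Complex.normSq_nonneg _
    have hW20 : 0 ≤ W2 := Finset.sum_nonneg fun _ _ =>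
      Finset.sum_nonneg fun _ _ => Complex.normSq_nonneg _
    -- projection facts
    have hPproj : (U * Uᴴ) * (U * Uᴴ) = U * Uᴴ := by
      rw [Matrix.mul_assoc, ← Matrix.mul_assoc Uᴴ, hUorth, Matrix.one_mul]
    have hPH : (U * Uᴴ)ᴴ = U * Uᴴ := by
      rw [conjTranspose_mul, conjTranspose_conjTranspose]
    have hQproj : (V * Vᴴ) * (V * Vᴴ) = V * Vᴴ := by
      rw [Matrix.mul_assoc, ← Matrix.mul_assoc Vᴴ, hVorth, Matrix.one_mul]
    have hQH : (V * Vᴴ)ᴴ = V * Vᴴ := by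
      rw [conjTranspose_mul, conjTranspose_conjTranspose]
    -- representation of c
    have hca : ∀ a, c a = t * ∑ j : Fin n₁, ∑ k : Fin n₂,
        if (j:ℕ) + (k:ℕ) = (i:ℕ) then (PT W) (j,a) k else 0 := by
      intro a
      rw [hc]
      simp only
      rw [hGstar]
      rfl
    have hrepr : (Zᴴ * (PT W)).trace = (N:ℂ) := by
      rw [hZ]
      rw [repr_lemma (i:ℕ) t ht c (PT W) hca]
      rw [hN]
      push_cast
      refine Finset.sum_congr rfl (fun a _ => ?_)
      rw [show star (c a) = (starRingEnd ℂ) (c a) from rfl, ← Complex.normSq_eq_conj_mul_self]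
    -- adjoint move
    have hPTW : PT W = (U*Uᴴ)*W + W*(V*Vᴴ) - (U*Uᴴ)*W*(V*Vᴴ) := by
      rw [hPT W, Matrix.mul_assoc W V Vᴴ, Matrix.mul_assoc (U * Uᴴ * W) V Vᴴ]
    have hadj : (Zᴴ * (PT W)).trace
        = (((U*Uᴴ)*Z + Z*(V*Vᴴ) - (U*Uᴴ)*Z*(V*Vᴴ))ᴴ * W).trace := by
      rw [hPTW]
      exact adj_lemma (U*Uᴴ) (V*Vᴴ) Z W hPH hQH
    set D : Matrix (Fin n₁ × Fin s) (Fin n₂) ℂ :=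
      (U*Uᴴ)*Z + Z*(V*Vᴴ) - (U*Uᴴ)*Z*(V*Vᴴ) with hD
    set S1 : ℝ := ∑ p, ∑ k, Complex.normSq (D p k) with hS1
    set S2 : ℝ := ∑ p, ∑ k, Complex.normSq (((U*Uᴴ)*Z*(V*Vᴴ)) p k) with hS2
    set SU : ℝ := ∑ ρ : Fin r, ∑ k, Complex.normSq ((Uᴴ*Z) ρ k) with hSU
    set SV : ℝ := ∑ p, ∑ ρ : Fin r, Complex.normSq ((Z*V) p ρ) with hSV
    have hS1nn : 0 ≤ S1 := Finset.sum_nonneg fun _ _ =>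
      Finset.sum_nonneg fun _ _ => Complex.normSq_nonneg _
    have hS2nn : 0 ≤ S2 := Finset.sum_nonneg fun _ _ =>
      Finset.sum_nonneg fun _ _ => Complex.normSq_nonneg _
    -- step 3: N ≤ √S1 √W2
    have habs : N = ‖(Dᴴ * W).trace‖ := by
      rw [hD, ← hadj, hrepr, Complex.norm_real, Real.norm_eq_abs, _root_.abs_of_nonneg hN0]
    have hstep3 : N ≤ Real.sqrt S1 * Real.sqrt W2 := by
      rw [habs]
      exact abs_trace_le D W
    -- Pythagoras
    have hpyth : S1 + S2 = SU + SV := by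
      have hmat := pyth (U*Uᴴ) (V*Vᴴ) Z hPproj hPH hQproj hQH
      have htr := congrArg Matrix.trace hmat
      rw [Matrix.trace_add, Matrix.trace_add] at htr
      rw [e1_lemma U hUorth Z, e2_lemma V hVorth Z] at htr
      rw [trace_hh, trace_hh, trace_hh, trace_hh] at htr
      exact_mod_cast htr
    -- incoherence bounds
    have hcntU : ((∑ k : Fin n₂,
        (Finset.univ.filter (fun j : Fin n₁ => (j:ℕ)+(k:ℕ)=(i:ℕ))).card : ℕ) : ℝ)
          = (w i : ℝ) := by
      rw [count1]
      exact_mod_cast (hw i).symm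
    have hcntV : ((∑ j : Fin n₁,
        (Finset.univ.filter (fun k : Fin n₂ => (j:ℕ)+(k:ℕ)=(i:ℕ))).card : ℕ) : ℝ)
          = (w i : ℝ) := by
      rw [count2]
      exact_mod_cast (hw i).symm
    have hSUb : SU ≤ K * N := by
      rw [hSU, hZ, hN]
      exact Ubound (i:ℕ) (w i : ℝ) hwpos t hts K c U hU hcntU
    have hSVb : SV ≤ K * N := by
      rw [hSV, hZ, hN]
      exact Vbound (i:ℕ) (w i : ℝ) hwpos t hts K c V hV hcntV
    have hS1le : S1 ≤ 2 * (K * N) := by linarith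
    have hNle : N ≤ Real.sqrt (2 * (K * N)) * Real.sqrt W2 :=
      hstep3.trans (mul_le_mul_of_nonneg_right (Real.sqrt_le_sqrt hS1le) (Real.sqrt_nonneg _))
    by_cases hNz : N = 0
    · rw [hNz, Real.sqrt_zero]
      positivity
    · have hNpos : 0 < N := lt_of_le_of_ne hN0 (Ne.symm hNz)
      have h2K : 0 ≤ 2 * K := by
        have h0 : 0 ≤ 2 * (K * N) := le_trans hS1nn hS1le
        nlinarith
      have hsplit : Real.sqrt (2 * (K * N)) = Real.sqrt (2 * K) * Real.sqrt N := by
        rw [show 2 * (K * N) = (2 * K) * N by ring, Real.sqrt_mul h2K]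
      rw [hsplit] at hNle
      have hsqN : Real.sqrt N * Real.sqrt N = N := Real.mul_self_sqrt hN0
      have hsqNpos : 0 < Real.sqrt N := Real.sqrt_pos.mpr hNpos
      have hfin : Real.sqrt N ≤ Real.sqrt (2 * K) * Real.sqrt W2 := by
        refine le_of_mul_le_mul_right ?_ hsqNpos
        calc Real.sqrt N * Real.sqrt N = N := hsqN
          _ ≤ Real.sqrt (2 * K) * Real.sqrt N * Real.sqrt W2 := hNle
          _ = Real.sqrt (2 * K) * Real.sqrt W2 * Real.sqrt N := by ring
      calc Real.sqrt N ≤ Real.sqrt (2 * K) * Real.sqrt W2 := hfin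
        _ = Real.sqrt W2 * Real.sqrt (2 * μ₁ * r / n) := by
            rw [mul_comm]
            congr 1
            rw [hK]
            ring
end

section
/- Define the weighted norms ‖Z‖_{G,F} = sqrt(Σ_{i=0}^{n-1} ‖G*(Z)e_i‖₂²/w_i) and suppose M is the rank-one-type matrix U V* with incoherent factors: max_i ‖U_i‖_F² ≤ μ₁r/n and max_k ‖e_kᵀ V‖₂² ≤ μ₁r/n. Then ‖U V*‖_{G,∞} := max_i ‖G*(U V*)e_i‖₂/√w_i ≤ μ₁r/n. -/
open Matrix

/-- For `M = U V*` with incoherent factors,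
`‖U V*‖_{G,∞} = max_i ‖G*(U V*) e_i‖₂ / √w_i ≤ μ₁ r / n`. -/
theorem UVstar_G_inf_bound {s n n₁ n₂ r : ℕ}
    (hn : n₁ + n₂ = n + 1) (μ₁ : ℝ)
    (w : Fin n → ℕ)
    (hw : ∀ i, w i = (Finset.univ.filter
      (fun p : Fin n₁ × Fin n₂ => (p.1 : ℕ) + (p.2 : ℕ) = (i : ℕ))).card)
    (Gstar : Matrix (Fin n₁ × Fin s) (Fin n₂) ℂ → Matrix (Fin s) (Fin n) ℂ)
    (hGstar : ∀ Z, Gstar Z = Matrix.of fun (a : Fin s) (i : Fin n) =>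
      (Complex.ofReal (Real.sqrt (w i)))⁻¹ *
        ∑ j : Fin n₁, ∑ k : Fin n₂,
          if (j : ℕ) + (k : ℕ) = (i : ℕ) then Z (j, a) k else 0)
    (U : Matrix (Fin n₁ × Fin s) (Fin r) ℂ)
    (V : Matrix (Fin n₂) (Fin r) ℂ)
    (hU : ∀ j : Fin n₁,
      ∑ a : Fin s, ∑ c : Fin r, Complex.normSq (U (j, a) c) ≤ μ₁ * r / n)
    (hV : ∀ k : Fin n₂, ∑ c : Fin r, Complex.normSq (V k c) ≤ μ₁ * r / n) :
    ∀ i : Fin n,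
      (Real.sqrt (w i))⁻¹ *
        Real.sqrt (∑ a : Fin s, Complex.normSq (Gstar (U * Vᴴ) a i)) ≤
      μ₁ * r / n := by
  intro i
  set B := μ₁ * r / n with hBdef
  have hB : 0 ≤ B := by
    rcases Nat.eq_zero_or_pos n₁ with h1 | h1
    · have h2 : 0 < n₂ := by omega
      exact le_trans (Finset.sum_nonneg fun c _ => Complex.normSq_nonneg _) (hV ⟨0, h2⟩)
    · exact le_trans (Finset.sum_nonneg fun a _ => Finset.sum_nonneg fun c _ =>
        Complex.normSq_nonneg _) (hU ⟨0, h1⟩)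
  set S := Finset.univ.filter
      (fun p : Fin n₁ × Fin n₂ => (p.1 : ℕ) + (p.2 : ℕ) = (i : ℕ)) with hSdef
  set T : Fin s → ℂ := fun a => ∑ p ∈ S, (U * Vᴴ) (p.1, a) p.2 with hTdef
  have hGT : ∀ a, Gstar (U * Vᴴ) a i
      = (Complex.ofReal (Real.sqrt (w i)))⁻¹ * T a := by
    intro a
    rw [hGstar]
    simp only [Matrix.of_apply]
    congr 1
    simp only [hTdef, hSdef, Finset.sum_filter, Fintype.sum_prod_type]
  -- pointwise bounds
  set u : Fin n₁ → Fin s → ℝ :=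
    fun j a => Real.sqrt (∑ c : Fin r, Complex.normSq (U (j, a) c)) with hudef
  set v : Fin n₂ → ℝ :=
    fun k => Real.sqrt (∑ c : Fin r, Complex.normSq (V k c)) with hvdef
  have habs : ∀ a, ‖T a‖ ≤ ∑ p ∈ S, u p.1 a * v p.2 := by
    intro a
    refine le_trans (norm_sum_le _ _) (Finset.sum_le_sum ?_)
    intro p _
    rw [Matrix.mul_apply]
    refine le_trans (norm_sum_le _ _) ?_
    have := Real.sum_mul_le_sqrt_mul_sqrt Finset.univ
      (fun c => ‖U (p.1, a) c‖) (fun c => ‖V p.2 c‖)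
    simp only [Complex.sq_norm] at this
    refine le_trans (le_of_eq ?_) this
    refine Finset.sum_congr rfl fun c _ => ?_
    rw [Matrix.conjTranspose_apply, norm_mul]
    congr 1
    simp [Complex.norm_def, Complex.normSq_conj]
  have hsq : ∀ a, Complex.normSq (T a)
      ≤ (∑ p ∈ S, (u p.1 a) ^ 2) * (∑ p ∈ S, (v p.2) ^ 2) := by
    intro a
    have h1 : Complex.normSq (T a) = ‖T a‖ ^ 2 := (Complex.sq_norm _).symm
    rw [h1]
    refine le_trans (pow_le_pow_left₀ (norm_nonneg _) (habs a) 2) ?_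
    exact Finset.sum_mul_sq_le_sq_mul_sq S (fun p => u p.1 a) (fun p => v p.2)
  have husq : ∀ j a, (u j a) ^ 2 = ∑ c : Fin r, Complex.normSq (U (j, a) c) := by
    intro j a
    exact Real.sq_sqrt (Finset.sum_nonneg fun c _ => Complex.normSq_nonneg _)
  have hvsq : ∀ k, (v k) ^ 2 = ∑ c : Fin r, Complex.normSq (V k c) := by
    intro k
    exact Real.sq_sqrt (Finset.sum_nonneg fun c _ => Complex.normSq_nonneg _)
  have hVsum : (∑ p ∈ S, (v p.2) ^ 2) ≤ S.card * B := by
    calc (∑ p ∈ S, (v p.2) ^ 2) ≤ ∑ p ∈ S, B := by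
          refine Finset.sum_le_sum fun p _ => ?_
          rw [hvsq]; exact hV p.2
      _ = S.card * B := by rw [Finset.sum_const, nsmul_eq_mul]
  have hUsum : (∑ a : Fin s, ∑ p ∈ S, (u p.1 a) ^ 2) ≤ S.card * B := by
    rw [Finset.sum_comm]
    calc (∑ p ∈ S, ∑ a : Fin s, (u p.1 a) ^ 2) ≤ ∑ p ∈ S, B := by
          refine Finset.sum_le_sum fun p _ => ?_
          simp_rw [husq]; exact hU p.1
      _ = S.card * B := by rw [Finset.sum_const, nsmul_eq_mul]
  have hTsum : (∑ a : Fin s, Complex.normSq (T a)) ≤ (S.card * B) * (S.card * B) := by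
    calc (∑ a : Fin s, Complex.normSq (T a))
        ≤ ∑ a : Fin s, (∑ p ∈ S, (u p.1 a) ^ 2) * (∑ p ∈ S, (v p.2) ^ 2) :=
          Finset.sum_le_sum fun a _ => hsq a
      _ = (∑ a : Fin s, ∑ p ∈ S, (u p.1 a) ^ 2) * (∑ p ∈ S, (v p.2) ^ 2) := by
          rw [Finset.sum_mul]
      _ ≤ (S.card * B) * (S.card * B) := by
          refine mul_le_mul hUsum hVsum (Finset.sum_nonneg fun p _ => sq_nonneg _) ?_
          positivity
  -- now finish
  have hwS : (w i : ℝ) = (S.card : ℝ) := by rw [hw i, hSdef]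
  rcases Nat.eq_zero_or_pos (w i) with h0 | h0
  · simp [h0, hB]
  · have hWpos : (0 : ℝ) < (w i : ℝ) := by exact_mod_cast h0
    have hsqrtpos : 0 < Real.sqrt (w i) := Real.sqrt_pos.2 hWpos
    have hsum : (∑ a : Fin s, Complex.normSq (Gstar (U * Vᴴ) a i))
        = ((w i : ℝ))⁻¹ * ∑ a : Fin s, Complex.normSq (T a) := by
      rw [Finset.mul_sum]
      refine Finset.sum_congr rfl fun a _ => ?_
      rw [hGT a, Complex.normSq_mul, ← Complex.ofReal_inv, Complex.normSq_ofReal]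
      congr 1
      rw [← mul_inv, Real.mul_self_sqrt (by positivity)]
    rw [hsum]
    have hle : ((w i : ℝ))⁻¹ * ∑ a : Fin s, Complex.normSq (T a)
        ≤ ((w i : ℝ))⁻¹ * ((S.card * B) * (S.card * B)) := by
      exact mul_le_mul_of_nonneg_left hTsum (by positivity)
    have h2 : Real.sqrt (((w i : ℝ))⁻¹ * ∑ a : Fin s, Complex.normSq (T a))
        ≤ Real.sqrt (((w i : ℝ))⁻¹ * ((S.card * B) * (S.card * B))) :=
      Real.sqrt_le_sqrt hle
    refine le_trans (mul_le_mul_of_nonneg_left h2 (by positivity)) ?_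
    rw [← hwS]
    have : ((w i : ℝ))⁻¹ * (((w i : ℝ)) * B * ((w i : ℝ) * B))
        = ((w i : ℝ)) * B ^ 2 := by
      field_simp
    rw [this, Real.sqrt_mul (le_of_lt hWpos), Real.sqrt_sq hB]
    rw [← mul_assoc]
    have h3 : (Real.sqrt (w i))⁻¹ * Real.sqrt (w i) = 1 := by
      field_simp
    rw [h3, one_mul]
end

section
/- (Kernel perturbation bound.) Suppose ‖A A*‖ ≥ 1, ‖P_T G A* A G* P_T − P_T G G* P_T‖ ≤ 1/2, ‖G‖ = 1, ‖G*‖ ≤ 1, and ‖A A* − I‖ ≤ sμ₀ (so that ‖A* A‖ ≤ 1 + sμ₀ ≤ 2sμ₀ for s μ₀ ≥ 1). Then for any W ∈ ℂ^{sn₁×n₂} with A G*(W) = 0 and (I − G G*)(W) = 0, one has ‖P_T(W)‖_F ≤ 4sμ₀ ‖P_{T⊥}(W)‖_F. -/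
open Matrix


open Matrix Finset

noncomputable def toEuc {m n : Type*} [Fintype m] [Fintype n] (Z : Matrix m n ℂ) :
    EuclideanSpace ℂ (m × n) := (WithLp.equiv 2 _).symm (fun pk : m × n => Z pk.1 pk.2)

lemma frob_eq_norm {m n : Type*} [Fintype m] [Fintype n] (Z : Matrix m n ℂ) :
    Real.sqrt (∑ p, ∑ k, Complex.normSq (Z p k)) = ‖toEuc Z‖ := by
  rw [EuclideanSpace.norm_eq]
  congr 1
  rw [Fintype.sum_prod_type]
  refine Finset.sum_congr rfl fun p _ => Finset.sum_congr rfl fun k _ => ?_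
  simp [toEuc, Complex.sq_norm]

lemma toEuc_sub {m n : Type*} [Fintype m] [Fintype n] (X Y : Matrix m n ℂ) :
    toEuc (X - Y) = toEuc X - toEuc Y := rfl
open Matrix Finset

variable {m n : Type*} [Fintype m] [Fintype n]

namespace KPBaux

lemma proj_idem (P : Matrix m m ℂ) (Q : Matrix n n ℂ) (hP : P * P = P) (hQ : Q * Q = Q)
    (Z : Matrix m n ℂ) :
    P * (P * Z + Z * Q - P * Z * Q) + (P * Z + Z * Q - P * Z * Q) * Q
      - P * (P * Z + Z * Q - P * Z * Q) * Q = P * Z + Z * Q - P * Z * Q := by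
  have hP2 : ∀ M : Matrix m n ℂ, P * (P * M) = P * M := fun M => by
    rw [← Matrix.mul_assoc, hP]
  simp only [Matrix.mul_add, Matrix.add_mul, Matrix.mul_sub, Matrix.sub_mul,
    Matrix.mul_assoc, hQ, hP2]
  abel

-- trace formulation of the Frobenius inner product
lemma sum_conj_mul_eq_trace (X Y : Matrix m n ℂ) :
    ∑ p, ∑ k, (starRingEnd ℂ) (X p k) * Y p k = Matrix.trace (Xᴴ * Y) := by
  rw [Matrix.trace, Finset.sum_comm]
  simp [Matrix.diag, Matrix.mul_apply, Matrix.conjTranspose_apply]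

lemma proj_selfadj (P : Matrix m m ℂ) (Q : Matrix n n ℂ) (hP : Pᴴ = P) (hQ : Qᴴ = Q)
    (X Y : Matrix m n ℂ) :
    Matrix.trace ((P * X + X * Q - P * X * Q)ᴴ * Y)
      = Matrix.trace (Xᴴ * (P * Y + Y * Q - P * Y * Q)) := by
  simp only [Matrix.conjTranspose_add, Matrix.conjTranspose_sub, Matrix.conjTranspose_mul,
    hP, hQ, Matrix.mul_add, Matrix.add_mul, Matrix.mul_sub, Matrix.sub_mul,
    Matrix.trace_add, Matrix.trace_sub, Matrix.mul_assoc]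
  rw [Matrix.trace_mul_comm Q (Xᴴ * Y), Matrix.trace_mul_comm Q (Xᴴ * (P * Y))]
  simp only [Matrix.mul_assoc]

end KPBaux

namespace KPBaux

lemma pythagoras (A B : Matrix m n ℂ) (h : Matrix.trace (Aᴴ * B) = 0) :
    ∑ p, ∑ k, Complex.normSq ((A + B) p k)
      = (∑ p, ∑ k, Complex.normSq (A p k)) + ∑ p, ∑ k, Complex.normSq (B p k) := by
  have hstar : ∑ p, ∑ k, A p k * (starRingEnd ℂ) (B p k) = 0 := by
    have := congrArg star h
    rw [← sum_conj_mul_eq_trace] at this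
    simpa [star_sum, mul_comm] using this
  have hre : ∑ p, ∑ k, (A p k * (starRingEnd ℂ) (B p k)).re = 0 := by
    have := congrArg Complex.re hstar
    simpa [Complex.re_sum] using this
  simp only [Matrix.add_apply, Complex.normSq_add, Finset.sum_add_distrib,
    ← Finset.mul_sum, hre, mul_zero, add_zero]

end KPBaux

namespace KPBaux

lemma proj_contraction (P : Matrix m m ℂ) (Q : Matrix n n ℂ)
    (hPh : Pᴴ = P) (hQh : Qᴴ = Q) (hP : P * P = P) (hQ : Q * Q = Q) (Z : Matrix m n ℂ) :
    ∑ p, ∑ k, Complex.normSq ((P * Z + Z * Q - P * Z * Q) p k)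
      ≤ ∑ p, ∑ k, Complex.normSq (Z p k) := by
  set A := P * Z + Z * Q - P * Z * Q with hA
  have hFsub : ∀ X Y : Matrix m n ℂ,
      P * (X - Y) + (X - Y) * Q - P * (X - Y) * Q
        = (P * X + X * Q - P * X * Q) - (P * Y + Y * Q - P * Y * Q) := by
    intro X Y
    simp only [Matrix.mul_sub, Matrix.sub_mul]
    abel
  have hFB : P * (Z - A) + (Z - A) * Q - P * (Z - A) * Q = 0 := by
    rw [hFsub, hA, proj_idem P Q hP hQ, sub_self]
  have htr : Matrix.trace (Aᴴ * (Z - A)) = 0 := by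
    rw [hA, proj_selfadj P Q hPh hQh, hFB, Matrix.mul_zero, Matrix.trace_zero]
  have hsplit := pythagoras A (Z - A) htr
  rw [add_sub_cancel] at hsplit
  rw [hsplit]
  have : (0:ℝ) ≤ ∑ p, ∑ k, Complex.normSq ((Z - A) p k) :=
    Finset.sum_nonneg fun p _ => Finset.sum_nonneg fun k _ => Complex.normSq_nonneg _
  linarith

end KPBaux
open Finset

namespace KPBaux

lemma cs_complex {ι : Type*} [Fintype ι] (b y : ι → ℂ) :
    Complex.normSq (∑ i, (starRingEnd ℂ) (b i) * y i)
      ≤ (∑ i, Complex.normSq (b i)) * ∑ i, Complex.normSq (y i) := by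
  have h1 : ‖∑ i, (starRingEnd ℂ) (b i) * y i‖ ≤ ∑ i, ‖b i‖ * ‖y i‖ := by
    refine (norm_sum_le _ _).trans_eq (Finset.sum_congr rfl fun i _ => ?_)
    rw [norm_mul, RCLike.norm_conj]
  have h2 : (∑ i, ‖b i‖ * ‖y i‖) ^ 2 ≤ (∑ i, ‖b i‖ ^ 2) * ∑ i, ‖y i‖ ^ 2 :=
    Finset.sum_mul_sq_le_sq_mul_sq _ _ _
  have h3 : Complex.normSq (∑ i, (starRingEnd ℂ) (b i) * y i)
      = ‖∑ i, (starRingEnd ℂ) (b i) * y i‖ ^ 2 := by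
    rw [← Complex.sq_norm]
  rw [h3]
  calc ‖∑ i, (starRingEnd ℂ) (b i) * y i‖ ^ 2
      ≤ (∑ i, ‖b i‖ * ‖y i‖) ^ 2 := by
        apply pow_le_pow_left₀ (norm_nonneg _) h1
    _ ≤ (∑ i, ‖b i‖ ^ 2) * ∑ i, ‖y i‖ ^ 2 := h2
    _ = (∑ i, Complex.normSq (b i)) * ∑ i, Complex.normSq (y i) := by
        congr 1 <;> exact Finset.sum_congr rfl fun i _ => by
          rw [← Complex.sq_norm]

lemma normSq_sum_le {ι : Type*} (F : Finset ι) (z : ι → ℂ) :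
    Complex.normSq (∑ t ∈ F, z t) ≤ F.card * ∑ t ∈ F, Complex.normSq (z t) := by
  have h1 : ‖∑ t ∈ F, z t‖ ≤ ∑ t ∈ F, ‖z t‖ := norm_sum_le _ _
  have h2 : (∑ t ∈ F, ‖z t‖) ^ 2 ≤ F.card * ∑ t ∈ F, ‖z t‖ ^ 2 :=
    sq_sum_le_card_mul_sum_sq
  have h3 : Complex.normSq (∑ t ∈ F, z t) = ‖∑ t ∈ F, z t‖ ^ 2 := by
    rw [← Complex.sq_norm]
  rw [h3]
  calc ‖∑ t ∈ F, z t‖ ^ 2 ≤ (∑ t ∈ F, ‖z t‖) ^ 2 :=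
        pow_le_pow_left₀ (norm_nonneg _) h1 2
    _ ≤ F.card * ∑ t ∈ F, ‖z t‖ ^ 2 := h2
    _ = F.card * ∑ t ∈ F, Complex.normSq (z t) := by
        congr 1; exact Finset.sum_congr rfl fun t _ => by rw [← Complex.sq_norm]

lemma col_scalar (K d N c : ℝ) (hK : 1 ≤ K) (hN : 0 ≤ N) (hc : 0 ≤ c)
    (hCS : c ≤ d * N) (hdK : |d - 1| ≤ K) : N + c * d - 2 * c ≤ K ^ 2 * N := by
  have hK2 : 1 ≤ K ^ 2 := by nlinarith
  rcases le_or_gt d 2 with h | h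
  · nlinarith [mul_nonneg hc (by linarith : (0:ℝ) ≤ 2 - d),
      mul_nonneg (by linarith : (0:ℝ) ≤ K ^ 2 - 1) hN]
  · have h1 : d - 1 ≤ K := (le_abs_self _).trans hdK
    have h2 : (0:ℝ) ≤ d - 1 := by linarith
    have h3 : (d - 1) ^ 2 ≤ K ^ 2 := by nlinarith
    have h4 : c * (d - 2) ≤ d * N * (d - 2) :=
      mul_le_mul_of_nonneg_right hCS (by linarith)
    nlinarith [mul_le_mul_of_nonneg_right h3 hN]

end KPBaux


open Matrix Finset KPBaux

/-- Kernel perturbation bound: if `A G*(W) = 0` and `(I − G G*)(W) = 0`, then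
under `‖A A*‖ ≥ 1`, the restricted isometry condition, and `‖A A* − I‖ ≤ sμ₀`,
one has `‖P_T(W)‖_F ≤ 4 s μ₀ ‖P_{T⊥}(W)‖_F`. -/
theorem kernel_perturbation_bound {s n n₁ n₂ r : ℕ}
    (hn : n₁ + n₂ = n + 1) (hn₁ : 0 < n₁) (hn₂ : 0 < n₂)
    (μ₀ : ℝ) (hsμ : 1 ≤ (s : ℝ) * μ₀)
    (w : Fin n → ℕ)
    (hw : ∀ i, w i = (Finset.univ.filter
      (fun p : Fin n₁ × Fin n₂ => (p.1 : ℕ) + (p.2 : ℕ) = (i : ℕ))).card)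
    (b : Fin n → Fin s → ℂ)
    (Aop : Matrix (Fin s) (Fin n) ℂ → (Fin n → ℂ))
    (hAop : ∀ X j, Aop X j = ∑ i, (starRingEnd ℂ) (b j i) * X i j)
    (Astar : (Fin n → ℂ) → Matrix (Fin s) (Fin n) ℂ)
    (hAstar : ∀ y, Astar y = Matrix.of fun (i : Fin s) (j : Fin n) => y j * b j i)
    (Gop : Matrix (Fin s) (Fin n) ℂ → Matrix (Fin n₁ × Fin s) (Fin n₂) ℂ)
    (hGop : ∀ X, Gop X = Matrix.of fun (p : Fin n₁ × Fin s) (k : Fin n₂) =>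
      (Complex.ofReal (Real.sqrt (w ⟨p.1.val + k.val,
          by have := p.1.isLt; have := k.isLt; omega⟩)))⁻¹ *
        X p.2 ⟨p.1.val + k.val, by have := p.1.isLt; have := k.isLt; omega⟩)
    (Gstar : Matrix (Fin n₁ × Fin s) (Fin n₂) ℂ → Matrix (Fin s) (Fin n) ℂ)
    (hGstar : ∀ Z, Gstar Z = Matrix.of fun (a : Fin s) (i : Fin n) =>
      (Complex.ofReal (Real.sqrt (w i)))⁻¹ *
        ∑ j : Fin n₁, ∑ k : Fin n₂,
          if (j : ℕ) + (k : ℕ) = (i : ℕ) then Z (j, a) k else 0)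
    (U : Matrix (Fin n₁ × Fin s) (Fin r) ℂ) (V : Matrix (Fin n₂) (Fin r) ℂ)
    (hUorth : Uᴴ * U = 1) (hVorth : Vᴴ * V = 1)
    (PT : Matrix (Fin n₁ × Fin s) (Fin n₂) ℂ → Matrix (Fin n₁ × Fin s) (Fin n₂) ℂ)
    (hPT : ∀ Z, PT Z = U * Uᴴ * Z + Z * V * Vᴴ - U * Uᴴ * Z * V * Vᴴ)
    -- `‖A A*‖ ≥ 1`
    (hAA : ∃ j : Fin n, 1 ≤ ∑ i, Complex.normSq (b j i))
    -- `‖P_T G A* A G* P_T − P_T G G* P_T‖ ≤ 1/2`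
    (hRIP : ∀ Z, Real.sqrt (∑ p, ∑ k, Complex.normSq
        ((PT (Gop (Astar (Aop (Gstar (PT Z))))) - PT (Gop (Gstar (PT Z)))) p k)) ≤
      (1 / 2) * Real.sqrt (∑ p, ∑ k, Complex.normSq (Z p k)))
    -- `‖A A* − I‖ ≤ s μ₀`
    (hAAI : ∀ j, |(∑ i, Complex.normSq (b j i)) - 1| ≤ (s : ℝ) * μ₀)
    (W : Matrix (Fin n₁ × Fin s) (Fin n₂) ℂ)
    (hW1 : Aop (Gstar W) = 0)
    (hW2 : Gop (Gstar W) = W) :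
    Real.sqrt (∑ p, ∑ k, Complex.normSq (PT W p k)) ≤
      4 * s * μ₀ * Real.sqrt (∑ p, ∑ k, Complex.normSq ((W - PT W) p k)) := by
  classical
  set K : ℝ := (s : ℝ) * μ₀ with hK
  have hK0 : 0 ≤ K := le_trans zero_le_one hsμ
  -- ## basic facts about w and the index map κ
  have hκlt : ∀ q : Fin n₁ × Fin n₂, (q.1 : ℕ) + (q.2 : ℕ) < n := by
    intro q; have := q.1.isLt; have := q.2.isLt; omega
  set κ : Fin n₁ × Fin n₂ → Fin n := fun q => ⟨(q.1 : ℕ) + (q.2 : ℕ), hκlt q⟩ with hκ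
  have hwcard : ∀ i : Fin n,
      (Finset.univ.filter (fun q : Fin n₁ × Fin n₂ => κ q = i)).card = w i := by
    intro i; rw [hw]; congr 1
    apply Finset.filter_congr; intro q _
    simp [hκ, Fin.ext_iff]
  have hwpos : ∀ i : Fin n, 0 < w i := by
    intro i
    rw [← hwcard]
    apply Finset.card_pos.2
    have hi := i.isLt
    refine ⟨(⟨min (i : ℕ) (n₁ - 1), by omega⟩,
      ⟨(i : ℕ) - min (i : ℕ) (n₁ - 1), by omega⟩), ?_⟩
    simp only [Finset.mem_filter, Finset.mem_univ, true_and]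
    apply Fin.ext
    show min (i : ℕ) (n₁ - 1) + ((i : ℕ) - min (i : ℕ) (n₁ - 1)) = (i : ℕ)
    omega
  -- normSq of the weight factor
  have hwfac : ∀ i : Fin n,
      Complex.normSq ((Complex.ofReal (Real.sqrt (w i)))⁻¹) = ((w i : ℝ))⁻¹ := by
    intro i
    rw [Complex.normSq_inv, Complex.normSq_ofReal,
      Real.mul_self_sqrt (by positivity)]
  -- ## Gop is an isometry
  have hGiso : ∀ X : Matrix (Fin s) (Fin n) ℂ,
      (∑ p : Fin n₁ × Fin s, ∑ k, Complex.normSq (Gop X p k))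
        = ∑ a, ∑ i, Complex.normSq (X a i) := by
    intro X
    have step1 : (∑ p : Fin n₁ × Fin s, ∑ k, Complex.normSq (Gop X p k))
        = ∑ a : Fin s, ∑ q : Fin n₁ × Fin n₂,
            ((w (κ q) : ℝ))⁻¹ * Complex.normSq (X a (κ q)) := by
      rw [Fintype.sum_prod_type, Finset.sum_comm]
      refine Finset.sum_congr rfl fun a _ => ?_
      rw [Fintype.sum_prod_type]
      refine Finset.sum_congr rfl fun j _ => Finset.sum_congr rfl fun k _ => ?_
      rw [hGop]
      simp only [Matrix.of_apply, Complex.normSq_mul, hwfac]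
      rfl
    rw [step1]
    refine Finset.sum_congr rfl fun a _ => ?_
    calc ∑ q : Fin n₁ × Fin n₂, ((w (κ q) : ℝ))⁻¹ * Complex.normSq (X a (κ q))
        = ∑ i : Fin n, ∑ _q ∈ Finset.univ.filter (fun q : Fin n₁ × Fin n₂ => κ q = i),
            ((w i : ℝ))⁻¹ * Complex.normSq (X a i) :=
          (Finset.sum_fiberwise_of_maps_to' (fun q _ => Finset.mem_univ (κ q))
            (fun i => ((w i : ℝ))⁻¹ * Complex.normSq (X a i))).symm
      _ = ∑ i : Fin n, Complex.normSq (X a i) := by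
          refine Finset.sum_congr rfl fun i _ => ?_
          rw [Finset.sum_const, hwcard, nsmul_eq_mul, ← mul_assoc,
            mul_inv_cancel₀ (by exact_mod_cast (hwpos i).ne'), one_mul]
  -- ## Gstar is a contraction
  have hGstar_con : ∀ Z : Matrix (Fin n₁ × Fin s) (Fin n₂) ℂ,
      (∑ a, ∑ i, Complex.normSq (Gstar Z a i))
        ≤ ∑ p : Fin n₁ × Fin s, ∑ k, Complex.normSq (Z p k) := by
    intro Z
    have hsum : ∀ (a : Fin s) (i : Fin n),
        (∑ j : Fin n₁, ∑ k : Fin n₂,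
          if (j : ℕ) + (k : ℕ) = (i : ℕ) then Z (j, a) k else 0)
        = ∑ q ∈ Finset.univ.filter (fun q : Fin n₁ × Fin n₂ => κ q = i),
            Z (q.1, a) q.2 := by
      intro a i
      rw [Finset.sum_filter, Fintype.sum_prod_type]
      refine Finset.sum_congr rfl fun j _ => Finset.sum_congr rfl fun k _ => ?_
      congr 1
      simp [hκ, Fin.ext_iff]
    have hentry : ∀ (a : Fin s) (i : Fin n),
        Complex.normSq (Gstar Z a i)
          ≤ ∑ q ∈ Finset.univ.filter (fun q : Fin n₁ × Fin n₂ => κ q = i),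
              Complex.normSq (Z (q.1, a) q.2) := by
      intro a i
      rw [hGstar]
      simp only [Matrix.of_apply, Complex.normSq_mul, hwfac, hsum]
      have hle := normSq_sum_le
        (Finset.univ.filter (fun q : Fin n₁ × Fin n₂ => κ q = i))
        (fun q => Z (q.1, a) q.2)
      rw [hwcard] at hle
      calc ((w i : ℝ))⁻¹ * Complex.normSq (∑ q ∈ Finset.univ.filter
            (fun q : Fin n₁ × Fin n₂ => κ q = i), Z (q.1, a) q.2)
          ≤ ((w i : ℝ))⁻¹ * ((w i : ℝ) * ∑ q ∈ Finset.univ.filter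
            (fun q : Fin n₁ × Fin n₂ => κ q = i), Complex.normSq (Z (q.1, a) q.2)) := by
            apply mul_le_mul_of_nonneg_left hle (by positivity)
        _ = _ := by
            rw [← mul_assoc, inv_mul_cancel₀ (by exact_mod_cast (hwpos i).ne'), one_mul]
    calc (∑ a, ∑ i, Complex.normSq (Gstar Z a i))
        ≤ ∑ a : Fin s, ∑ i : Fin n,
            ∑ q ∈ Finset.univ.filter (fun q : Fin n₁ × Fin n₂ => κ q = i),
              Complex.normSq (Z (q.1, a) q.2) := by
          refine Finset.sum_le_sum fun a _ => Finset.sum_le_sum fun i _ => hentry a i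
      _ = ∑ a : Fin s, ∑ q : Fin n₁ × Fin n₂, Complex.normSq (Z (q.1, a) q.2) :=
          Finset.sum_congr rfl fun a _ =>
            Finset.sum_fiberwise_of_maps_to (fun q _ => Finset.mem_univ (κ q))
              (fun q : Fin n₁ × Fin n₂ => Complex.normSq (Z (q.1, a) q.2))
      _ = ∑ p : Fin n₁ × Fin s, ∑ k, Complex.normSq (Z p k) := by
          simp only [Fintype.sum_prod_type]
          rw [Finset.sum_comm]
  -- ## the A*A bound, columnwise
  have hAbound : ∀ Y : Matrix (Fin s) (Fin n) ℂ,
      (∑ i, ∑ j, Complex.normSq ((Y - Astar (Aop Y)) i j))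
        ≤ K ^ 2 * ∑ i, ∑ j, Complex.normSq (Y i j) := by
    intro Y
    rw [Finset.sum_comm (f := fun i j => Complex.normSq ((Y - Astar (Aop Y)) i j)),
        Finset.sum_comm (f := fun i j => Complex.normSq (Y i j)), Finset.mul_sum]
    refine Finset.sum_le_sum fun j _ => ?_
    set c : ℂ := ∑ i, (starRingEnd ℂ) (b j i) * Y i j with hc
    set d : ℝ := ∑ i, Complex.normSq (b j i) with hd
    set N : ℝ := ∑ i, Complex.normSq (Y i j) with hN
    have hentry : ∀ i, (Y - Astar (Aop Y)) i j = Y i j - c * b j i := by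
      intro i
      simp [hAstar, hAop, Matrix.sub_apply, hc]
    have hsum2 : (∑ i, (Y i j * (starRingEnd ℂ) (c * b j i)))
        = ((Complex.normSq c : ℝ) : ℂ) := by
      have hterm : ∀ i : Fin s, Y i j * (starRingEnd ℂ) (c * b j i)
          = (starRingEnd ℂ) c * ((starRingEnd ℂ) (b j i) * Y i j) := by
        intro i; simp only [_root_.map_mul]; ring
      rw [Finset.sum_congr rfl fun i _ => hterm i, ← Finset.mul_sum, ← hc,
        mul_comm, Complex.mul_conj]
    have hexp : (∑ i, Complex.normSq ((Y - Astar (Aop Y)) i j))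
        = N + Complex.normSq c * d - 2 * Complex.normSq c := by
      simp only [hentry, Complex.normSq_sub, Complex.normSq_mul]
      rw [Finset.sum_sub_distrib, Finset.sum_add_distrib, ← Finset.mul_sum,
        ← Finset.mul_sum, ← Complex.re_sum, hsum2, Complex.ofReal_re, ← hN, ← hd]
    rw [hexp]
    have hCS : Complex.normSq c ≤ d * N := cs_complex (b j) (fun i => Y i j)
    exact col_scalar K d N (Complex.normSq c) hsμ
      (Finset.sum_nonneg fun i _ => Complex.normSq_nonneg _)
      (Complex.normSq_nonneg c) hCS (hAAI j)
  -- ## linearity facts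
  have hite : ∀ (c : Prop) [Decidable c] (x y : ℂ),
      (if c then x - y else 0) = (if c then x else 0) - (if c then y else 0) := by
    intros c _ x y; split <;> simp
  have hGstar_sub : ∀ X Y, Gstar (X - Y) = Gstar X - Gstar Y := by
    intro X Y; funext a i
    simp [hGstar, Matrix.sub_apply, hite, Finset.sum_sub_distrib, mul_sub]
  have hAop_sub : ∀ X Y, Aop (X - Y) = Aop X - Aop Y := by
    intro X Y; funext j
    simp [hAop, Matrix.sub_apply, mul_sub, Finset.sum_sub_distrib]
  have hAstar_sub : ∀ x y, Astar (x - y) = Astar x - Astar y := by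
    intro x y; funext i j
    simp [hAstar, Matrix.sub_apply, sub_mul]
  have hGop_sub : ∀ X Y, Gop (X - Y) = Gop X - Gop Y := by
    intro X Y; funext p k
    simp [hGop, Matrix.sub_apply, mul_sub]
  have hPT_sub : ∀ X Y, PT (X - Y) = PT X - PT Y := by
    intro X Y
    simp only [hPT, Matrix.mul_sub, Matrix.sub_mul]
    abel
  have hAstar_zero : Astar 0 = 0 := by
    funext i j; simp [hAstar]
  have hGop_zero : Gop 0 = 0 := by
    funext p k; simp [hGop]
  have hPT_zero : PT 0 = 0 := by
    simp [hPT]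
  -- ## PT facts
  have hPT' : ∀ Z, PT Z = U * Uᴴ * Z + Z * (V * Vᴴ) - U * Uᴴ * Z * (V * Vᴴ) := by
    intro Z; rw [hPT, Matrix.mul_assoc Z, Matrix.mul_assoc (U * Uᴴ * Z)]
  have hPmul : (U * Uᴴ) * (U * Uᴴ) = U * Uᴴ := by
    rw [Matrix.mul_assoc, ← Matrix.mul_assoc Uᴴ, hUorth, Matrix.one_mul]
  have hQmul : (V * Vᴴ) * (V * Vᴴ) = V * Vᴴ := by
    rw [Matrix.mul_assoc, ← Matrix.mul_assoc Vᴴ, hVorth, Matrix.one_mul]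
  have hPT_idem : ∀ Z, PT (PT Z) = PT Z := by
    intro Z
    rw [hPT' (PT Z), hPT' Z]
    exact proj_idem (U * Uᴴ) (V * Vᴴ) hPmul hQmul Z
  have hPT_con : ∀ Z, (∑ p, ∑ k, Complex.normSq (PT Z p k))
      ≤ ∑ p, ∑ k, Complex.normSq (Z p k) := by
    intro Z
    rw [hPT' Z]
    exact proj_contraction (U * Uᴴ) (V * Vᴴ)
      (by simp [Matrix.conjTranspose_mul]) (by simp [Matrix.conjTranspose_mul])
      hPmul hQmul Z
  -- ## key identity
  set Vp := W - PT W with hVp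
  set Yb := Gstar Vp with hYb
  set D := Yb - Astar (Aop Yb) with hD
  set E := PT (Gop (Astar (Aop (Gstar (PT W))))) - PT (Gop (Gstar (PT W))) with hE
  have hAopYb : Aop Yb = 0 - Aop (Gstar (PT W)) := by
    rw [hYb, hVp, hGstar_sub, hAop_sub, hW1]
  have keyid : PT W = PT (Gop D) - E := by
    have h1 : Gstar Vp = Gstar W - Gstar (PT W) := by rw [hVp, hGstar_sub]
    have h2 : Astar (Aop Yb) = Astar 0 - Astar (Aop (Gstar (PT W))) := by
      rw [hAopYb, hAstar_sub]
    have h3 : Gop D = Gop (Gstar W) - Gop (Gstar (PT W))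
        - (Gop (Astar 0) - Gop (Astar (Aop (Gstar (PT W))))) := by
      rw [hD, hGop_sub, h2, hGop_sub, hYb, h1, hGop_sub]
    have h4 : PT (Gop D) = PT W - PT (Gop (Gstar (PT W)))
        + PT (Gop (Astar (Aop (Gstar (PT W))))) := by
      rw [h3, hPT_sub, hPT_sub, hPT_sub, hW2, hAstar_zero, hGop_zero, hPT_zero]
      abel
    rw [h4, hE]
    abel
  -- ## norm bounds
  have hsqrt_nonneg : ∀ x : ℝ, 0 ≤ Real.sqrt x := fun x => Real.sqrt_nonneg x
  -- bound on E from hRIP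
  have hEbound : Real.sqrt (∑ p, ∑ k, Complex.normSq (E p k))
      ≤ (1 / 2) * Real.sqrt (∑ p, ∑ k, Complex.normSq (PT W p k)) := by
    have := hRIP (PT W)
    rw [hPT_idem W] at this
    exact this
  -- bound on PT (Gop D)
  have hmono : ∀ x y : ℝ, x ≤ y → Real.sqrt x ≤ Real.sqrt y := fun x y h =>
    Real.sqrt_le_sqrt h
  have hDbound : Real.sqrt (∑ p, ∑ k, Complex.normSq (PT (Gop D) p k))
      ≤ K * Real.sqrt (∑ p, ∑ k, Complex.normSq (Vp p k)) := by
    calc Real.sqrt (∑ p, ∑ k, Complex.normSq (PT (Gop D) p k))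
        ≤ Real.sqrt (∑ p, ∑ k, Complex.normSq (Gop D p k)) := hmono _ _ (hPT_con _)
      _ = Real.sqrt (∑ a, ∑ i, Complex.normSq (D a i)) := by rw [hGiso]
      _ ≤ Real.sqrt (K ^ 2 * ∑ a, ∑ i, Complex.normSq (Yb a i)) := by
          apply hmono
          have := hAbound Yb
          rw [← hD] at this
          exact this
      _ = K * Real.sqrt (∑ a, ∑ i, Complex.normSq (Yb a i)) := by
          rw [Real.sqrt_mul (by positivity), Real.sqrt_sq hK0]
      _ ≤ K * Real.sqrt (∑ p, ∑ k, Complex.normSq (Vp p k)) := by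
          apply mul_le_mul_of_nonneg_left _ hK0
          apply hmono
          exact hGstar_con Vp
  -- triangle inequality via the Euclidean space model
  have htri : Real.sqrt (∑ p, ∑ k, Complex.normSq (PT W p k))
      ≤ Real.sqrt (∑ p, ∑ k, Complex.normSq (PT (Gop D) p k))
        + Real.sqrt (∑ p, ∑ k, Complex.normSq (E p k)) := by
    rw [keyid]
    rw [frob_eq_norm, frob_eq_norm, frob_eq_norm, toEuc_sub]
    exact norm_sub_le _ _
  -- ## conclude
  set x := Real.sqrt (∑ p, ∑ k, Complex.normSq (PT W p k)) with hx
  set y := Real.sqrt (∑ p, ∑ k, Complex.normSq (Vp p k)) with hy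
  have hy0 : 0 ≤ y := Real.sqrt_nonneg _
  have hKy : 0 ≤ K * y := mul_nonneg hK0 hy0
  have : x ≤ K * y + (1 / 2) * x := le_trans htri (by linarith [hDbound, hEbound])
  have hfinal : x ≤ 2 * (K * y) := by linarith
  calc x ≤ 2 * (K * y) := hfinal
    _ ≤ 4 * (K * y) := by linarith
    _ = 4 * s * μ₀ * y := by rw [hK]; ring
end
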